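/- arXiv:2206.02501 — 6 statements merged into one kernel-verified Lean document; each statement's English description precedes it below -/
import Mathlib

section
/- For every λ ∈ ℝ^n and every 1 ≤ m ≤ n, the degree-m real polynomial s ↦ S_m(λ + s·𝟙) has only real roots (i.e., it splits over ℝ, having m real roots counted with multiplicity). In other words, the elementary symmetric polynomial S_m is hyperbolic in the direction 𝟙 = (1,…,1). -/
/-- The `m`-th elementary symmetric polynomial of `lam : Fin n → ℝ`. -/
noncomputable def esymm (n m : ℕ) (lam : Fin n → ℝ) : ℝ :=
  ∑ T ∈ Finset.univ.powersetCard m, ∏ i ∈ T, lam i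

open Polynomial in
/-- Iterated derivatives of a real-rooted polynomial of degree `n` keep all roots real. -/
lemma deriv_iter_roots (p : ℝ[X]) (n : ℕ) (hdeg : p.natDegree = n)
    (hroots : Multiset.card p.roots = n) :
    ∀ k, k ≤ n → (derivative^[k] p).natDegree = n - k ∧
      Multiset.card (derivative^[k] p).roots = n - k := by
  intro k
  induction k with
  | zero => intro _; simpa using ⟨hdeg, hroots⟩
  | succ k ih =>
    intro hk
    obtain ⟨hd, hr⟩ := ih (Nat.le_of_succ_le hk)
    have h1 : n - k ≤ Multiset.card (derivative (derivative^[k] p)).roots + 1 := by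
      rw [← hr]; exact Polynomial.card_roots_le_derivative _
    have h2 : (derivative (derivative^[k] p)).natDegree ≤ n - (k + 1) := by
      calc (derivative (derivative^[k] p)).natDegree ≤ (derivative^[k] p).natDegree - 1 :=
            natDegree_derivative_le _
        _ = n - (k + 1) := by rw [hd]; omega
    have h3 : Multiset.card (derivative (derivative^[k] p)).roots ≤
        (derivative (derivative^[k] p)).natDegree := Polynomial.card_roots' _
    have hcard : Multiset.card (derivative (derivative^[k] p)).roots = n - (k + 1) := by omega
    have hdeg' : (derivative (derivative^[k] p)).natDegree = n - (k + 1) := by omega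
    rw [Function.iterate_succ_apply']
    exact ⟨hdeg', hcard⟩

open Polynomial in
/-- The elementary symmetric polynomial `S_m` is hyperbolic in the direction `(1,…,1)`:
for every `x ∈ ℝ^n` the degree-`m` polynomial `s ↦ S_m(x + s·𝟙)` splits over `ℝ`
with `m` real roots (`-μ_j`) counted with multiplicity. -/
theorem esymm_hyperbolic (n m : ℕ) (hm1 : 1 ≤ m) (hmn : m ≤ n) (x : Fin n → ℝ) :
    ∃ μ : Fin m → ℝ, ∀ s : ℝ,
      esymm n m (fun i => x i + s) = (n.choose m : ℝ) * ∏ j, (s + μ j) := by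
  classical
  set p : ℝ[X] := ∏ i : Fin n, (X + C (x i)) with hp
  have hmonic : p.Monic := monic_prod_of_monic _ _ fun i _ => monic_X_add_C (x i)
  have hpdeg : p.natDegree = n := by
    rw [hp, natDegree_prod _ _ fun i _ => (monic_X_add_C (x i)).ne_zero]
    simp [natDegree_X_add_C]
  have hproots : Multiset.card p.roots = n := by
    have hsp : p.Splits :=
      Splits.prod fun i _ => Splits.of_degree_le_one (by simp [degree_X_add_C])
    rw [Polynomial.splits_iff_card_roots.mp hsp, hpdeg]
  -- the Hasse derivative
  set q : ℝ[X] := Polynomial.hasseDeriv (n - m) p with hq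
  have hfact : ((Nat.factorial (n - m) : ℕ) : ℝ) • q = derivative^[n - m] p := by
    have := congrFun (Polynomial.factorial_smul_hasseDeriv (R := ℝ) (n - m)) p
    simpa [Nat.cast_smul_eq_nsmul] using this
  obtain ⟨hDdeg, hDroots⟩ := deriv_iter_roots p n hpdeg hproots (n - m) (Nat.sub_le n m)
  have hnm : n - (n - m) = m := Nat.sub_sub_self hmn
  have hfne : ((Nat.factorial (n - m) : ℕ) : ℝ) ≠ 0 := Nat.cast_ne_zero.mpr (Nat.factorial_ne_zero _)
  have hqroots : q.roots = (derivative^[n - m] p).roots := by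
    rw [← hfact, Polynomial.roots_smul_nonzero _ hfne]
  have hqcard : Multiset.card q.roots = m := by rw [hqroots, hDroots, hnm]
  have hqdegle : q.natDegree ≤ m := by
    have : q = ((Nat.factorial (n - m) : ℕ) : ℝ)⁻¹ • (derivative^[n - m] p) := by
      rw [← hfact, smul_smul, inv_mul_cancel₀ hfne, one_smul]
    rw [this]
    exact le_trans (Polynomial.natDegree_smul_le _ _) (by rw [hDdeg, hnm])
  have hqcoeff : q.coeff m = (n.choose m : ℝ) := by
    rw [hq, Polynomial.hasseDeriv_coeff]
    have : m + (n - m) = n := Nat.add_sub_cancel' hmn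
    have hpc : p.coeff n = 1 := by rw [← hpdeg]; exact hmonic.coeff_natDegree
    rw [this, hpc, Nat.choose_symm hmn, mul_one]
  have hchoose_ne : (n.choose m : ℝ) ≠ 0 :=
    Nat.cast_ne_zero.mpr (Nat.choose_pos hmn).ne'
  have hqne : q ≠ 0 := fun h => hchoose_ne (by rw [← hqcoeff, h]; simp)
  have hqdeg : q.natDegree = m :=
    le_antisymm hqdegle (le_trans (by rw [hqcard]) (Polynomial.card_roots' q))
  have hqlead : q.leadingCoeff = (n.choose m : ℝ) := by
    rw [Polynomial.leadingCoeff, hqdeg, hqcoeff]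
  have hsplits : q.Splits :=
    Polynomial.splits_iff_card_roots.mpr (by rw [hqcard, hqdeg])
  have hfactor : q = C q.leadingCoeff * (q.roots.map fun a => X - C a).prod :=
    hsplits.eq_prod_roots
  -- the roots list
  set l : List ℝ := q.roots.toList with hl
  have hllen : l.length = m := by rw [hl, Multiset.length_toList, hqcard]
  refine ⟨fun j => - l.get (Fin.cast hllen.symm j), fun s => ?_⟩
  -- identify esymm with the evaluation of q at s
  have key : esymm n m (fun i => x i + s) = q.eval s := by
    have h1 : esymm n m (fun i => x i + s) =
        (∏ i : Fin n, (X + C (x i + s))).coeff (n - m) := by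
      rw [Finset.prod_X_add_C_coeff _ _ (by simp [Nat.sub_le])]
      simp [esymm, Finset.card_univ, hnm]
    have h2 : (∏ i : Fin n, (X + C (x i + s))) = Polynomial.taylor s p := by
      rw [Polynomial.taylor_apply, hp, Polynomial.prod_comp]
      refine Finset.prod_congr rfl fun i _ => ?_
      simp only [add_comp, X_comp, C_comp, C_add]
      ring
    rw [h1, h2, Polynomial.taylor_coeff, ← hq]
  rw [key]
  conv_lhs => rw [hfactor]
  rw [eval_mul, eval_C, hqlead, eval_multiset_prod]
  congr 1
  have hroots_l : q.roots = (l : Multiset ℝ) := (Multiset.coe_toList _).symm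
  rw [hroots_l, Multiset.map_map, Multiset.map_coe, Multiset.prod_coe]
  have h3 : l.map ((eval s) ∘ (fun a => X - C a)) = List.ofFn (fun j : Fin l.length =>
      s - l.get j) := by
    conv_lhs => rw [← List.ofFn_get l, List.map_ofFn]
    refine congrArg List.ofFn ?_
    funext j
    simp
  rw [h3, List.prod_ofFn, ← Fin.prod_congr' _ hllen.symm]
  refine Finset.prod_congr rfl fun j _ => ?_
  rw [sub_eq_add_neg]
end

section
/- Let 1 ≤ m ≤ n and let λ ∈ ℝ^n be such that S_m(λ + s·𝟙) > 0 for all s ≥ 0. Then S_p(λ) > 0 for every p = 1, …, m. More precisely, if μ_1, …, μ_m > 0 denote the negatives of the (necessarily real and negative) roots of s ↦ S_m(λ + s·𝟙), then S_p(λ) = binom(n,m)·binom(n-p, m-p)^{-1}·e_p(μ_1,…,μ_m) for p = 1, …, m, where e_p is the p-th elementary symmetric polynomial in m variables. -/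
open Polynomial Finset in
lemma key_identity (n m : ℕ) (hmn : m ≤ n) (lam : Fin n → ℝ) (μ : Fin m → ℝ)
    (hfac : ∀ s : ℝ,
      esymm n m (fun i => lam i + s) = (n.choose m : ℝ) * ∏ j, (s + μ j))
    (p : ℕ) (hpm : p ≤ m) :
    ((n - p).choose (m - p) : ℝ) * esymm n p lam = (n.choose m : ℝ) * esymm m p μ := by
  classical
  set P : ℝ[X] := ∑ T ∈ (univ : Finset (Fin n)).powersetCard m, ∏ i ∈ T, (X + C (lam i))
  set Q : ℝ[X] := C (n.choose m : ℝ) * ∏ j, (X + C (μ j))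
  have hPQ : P = Q := by
    apply Polynomial.funext
    intro s
    have := hfac s
    simp only [P, Q, eval_finset_sum, eval_prod, eval_add, eval_X, eval_C, eval_mul,
      esymm] at this ⊢
    have h1 : ∀ T : Finset (Fin n), (∏ x ∈ T, (s + lam x)) = ∏ x ∈ T, (lam x + s) :=
      fun T => Finset.prod_congr rfl fun i _ => by ring
    simp_rw [h1]
    exact this
  -- compute coefficient at m - p on both sides
  have hcard : ∀ T ∈ (univ : Finset (Fin n)).powersetCard m, #T = m := by
    intro T hT; exact (Finset.mem_powersetCard.mp hT).2
  have hP : P.coeff (m - p) = ∑ T ∈ (univ : Finset (Fin n)).powersetCard m,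
      ∑ U ∈ T.powersetCard p, ∏ i ∈ U, lam i := by
    simp only [P, finset_sum_coeff]
    refine Finset.sum_congr rfl fun T hT => ?_
    rw [Finset.prod_X_add_C_coeff _ _ (by rw [hcard T hT]; omega), hcard T hT,
      Nat.sub_sub_self hpm]
  have hQ : Q.coeff (m - p) = (n.choose m : ℝ) * esymm m p μ := by
    simp only [Q, coeff_C_mul]
    rw [Finset.prod_X_add_C_coeff _ _ (by simpa using Nat.sub_le m p)]
    simp only [Finset.card_univ, Fintype.card_fin, Nat.sub_sub_self hpm]
    rfl
  -- double counting
  have hswap : ∑ T ∈ (univ : Finset (Fin n)).powersetCard m,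
      ∑ U ∈ T.powersetCard p, ∏ i ∈ U, lam i
      = ∑ U ∈ (univ : Finset (Fin n)).powersetCard p,
        ∑ T ∈ ((univ : Finset (Fin n)).powersetCard m).filter (fun T => U ⊆ T),
          ∏ i ∈ U, lam i := by
    refine Finset.sum_comm' fun T U => ?_
    simp only [Finset.mem_powersetCard, Finset.mem_filter, Finset.subset_univ, true_and]
    tauto
  have hcount : ∀ U ∈ (univ : Finset (Fin n)).powersetCard p,
      #(((univ : Finset (Fin n)).powersetCard m).filter (fun T => U ⊆ T))
        = (n - p).choose (m - p) := by
    intro U hU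
    have hUp : #U = p := (Finset.mem_powersetCard.mp hU).2
    have hc : #((univ : Finset (Fin n)) \ U) = n - p := by
      rw [Finset.card_sdiff_of_subset (Finset.subset_univ U), hUp, Finset.card_univ, Fintype.card_fin]
    rw [show ((n - p).choose (m - p)) = #(((univ : Finset (Fin n)) \ U).powersetCard (m - p))
      from by rw [Finset.card_powersetCard, hc]]
    apply Finset.card_nbij (fun T => T \ U)
    · intro T hT
      simp only [Finset.mem_coe, Finset.mem_filter, Finset.mem_powersetCard] at hT ⊢
      obtain ⟨⟨_, hTm⟩, hUT⟩ := hT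
      exact ⟨Finset.sdiff_subset_sdiff (Finset.subset_univ T) le_rfl,
        by rw [Finset.card_sdiff_of_subset hUT, hTm, hUp]⟩
    · intro T₁ h₁ T₂ h₂ he
      simp only [Finset.coe_filter, Set.mem_setOf_eq, Finset.mem_powersetCard] at h₁ h₂
      have e1 : T₁ = T₁ \ U ∪ U := by
        rw [Finset.sdiff_union_self_eq_union, Finset.union_eq_left.mpr h₁.2]
      have e2 : T₂ = T₂ \ U ∪ U := by
        rw [Finset.sdiff_union_self_eq_union, Finset.union_eq_left.mpr h₂.2]
      rw [e1, e2]
      exact congrArg (· ∪ U) he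
    · intro V hV
      simp only [Finset.mem_coe, Finset.mem_powersetCard] at hV
      obtain ⟨hVsub, hVcard⟩ := hV
      refine ⟨V ∪ U, ?_, ?_⟩
      · simp only [Finset.coe_filter, Set.mem_setOf_eq, Finset.mem_powersetCard]
        have hdisj : Disjoint V U := Finset.disjoint_right.mpr fun a haU haV =>
          (Finset.mem_sdiff.mp (hVsub haV)).2 haU
        refine ⟨⟨Finset.subset_univ _, ?_⟩, Finset.subset_union_right⟩
        rw [Finset.card_union_of_disjoint hdisj, hVcard, hUp]
        omega
      · show (V ∪ U) \ U = V
        rw [Finset.union_sdiff_right, Finset.sdiff_eq_self_of_disjoint]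
        exact Finset.disjoint_right.mpr fun a haU haV =>
          (Finset.mem_sdiff.mp (hVsub haV)).2 haU
  have hfinal : ∑ U ∈ (univ : Finset (Fin n)).powersetCard p,
      ∑ T ∈ ((univ : Finset (Fin n)).powersetCard m).filter (fun T => U ⊆ T),
        ∏ i ∈ U, lam i
      = ((n - p).choose (m - p) : ℝ) * esymm n p lam := by
    rw [esymm, Finset.mul_sum]
    refine Finset.sum_congr rfl fun U hU => ?_
    rw [Finset.sum_const, hcount U hU, nsmul_eq_mul]
  have := congrArg (fun q : ℝ[X] => q.coeff (m - p)) hPQ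
  rw [hP, hQ, hswap, hfinal] at this
  exact this

theorem esymm_pos_of_shift_pos (n m : ℕ) (hm1 : 1 ≤ m) (hmn : m ≤ n)
    (lam : Fin n → ℝ) (μ : Fin m → ℝ)
    (hfac : ∀ s : ℝ,
      esymm n m (fun i => lam i + s) = (n.choose m : ℝ) * ∏ j, (s + μ j))
    (hpos : ∀ s : ℝ, 0 ≤ s → 0 < esymm n m (fun i => lam i + s)) :
    (∀ j, 0 < μ j) ∧
      ∀ p, 1 ≤ p → p ≤ m →
        esymm n p lam = (n.choose m : ℝ) / ((n - p).choose (m - p) : ℝ) * esymm m p μ ∧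
          0 < esymm n p lam := by
  have hμ : ∀ j, 0 < μ j := by
    intro j
    by_contra h
    push_neg at h
    have h0 : 0 ≤ -μ j := by linarith
    have := hpos (-μ j) h0
    rw [hfac (-μ j)] at this
    have : (0 : ℝ) < (n.choose m : ℝ) * ∏ k, (-μ j + μ k) := this
    have hz : ∏ k, (-μ j + μ k) = 0 :=
      Finset.prod_eq_zero (Finset.mem_univ j) (by ring)
    rw [hz, mul_zero] at this
    exact lt_irrefl 0 this
  refine ⟨hμ, fun p hp1 hpm => ?_⟩
  have hkey := key_identity n m hmn lam μ hfac p hpm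
  have hchoose : 0 < ((n - p).choose (m - p) : ℝ) := by
    have : 0 < (n - p).choose (m - p) := Nat.choose_pos (by omega)
    exact_mod_cast this
  have heμ : 0 < esymm m p μ := by
    rw [esymm]
    apply Finset.sum_pos
    · intro T hT
      exact Finset.prod_pos fun j _ => hμ j
    · rw [← Finset.card_pos, Finset.card_powersetCard, Finset.card_univ, Fintype.card_fin]
      exact Nat.choose_pos hpm
  have heq : esymm n p lam = (n.choose m : ℝ) / ((n - p).choose (m - p) : ℝ) * esymm m p μ := by
    field_simp
    linarith [hkey]
  refine ⟨heq, ?_⟩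
  rw [heq]
  have hcm : 0 < (n.choose m : ℝ) := by exact_mod_cast Nat.choose_pos hmn
  positivity
end

section
/- (Gårding) Let P be a homogeneous polynomial of degree m > 1 on ℝ^N that is hyperbolic at a ∈ ℝ^N with P(a) > 0. For x ∈ ℝ^N let μ_1(a,x), …, μ_m(a,x) denote the real numbers such that P(s·a + x) = P(a) ∏_{k=1}^m (s + μ_k(a,x)), and set h(a,x) = min_k μ_k(a,x). Then h(a, s·x) = s·h(a,x) for all s ≥ 0, and h is superadditive: h(a, x + y) ≥ h(a,x) + h(a,y) for all x, y ∈ ℝ^N. In particular, the cone C(P,a) = {x : h(a,x) > 0} is convex. -/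
open MvPolynomial Polynomial Complex

noncomputable section GardingAux

/-- the complex absolute value, as an absolute value -/
def Complex.abs : AbsoluteValue ℂ ℝ where
  toFun z := ‖z‖
  map_mul' := norm_mul
  nonneg' := norm_nonneg
  eq_zero' _ := norm_eq_zero
  add_le' := norm_add_le

lemma Complex.abs_apply (z : ℂ) : Complex.abs z = ‖z‖ := rfl

variable {N m : ℕ}

/-- evaluation of the complexification of `P` -/
def cev (P : MvPolynomial (Fin N) ℝ) (ζ : Fin N → ℂ) : ℂ :=
  MvPolynomial.eval ζ (MvPolynomial.map (algebraMap ℝ ℂ) P)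

lemma cev_real (P : MvPolynomial (Fin N) ℝ) (v : Fin N → ℝ) :
    cev P (fun i => (v i : ℂ)) = ((MvPolynomial.eval v P : ℝ) : ℂ) := by
  unfold cev
  rw [MvPolynomial.eval_map]
  have h := MvPolynomial.eval₂_comp_left (algebraMap ℝ ℂ) (RingHom.id ℝ) v P
  simp only [RingHom.comp_id] at h
  rw [show ((MvPolynomial.eval v P : ℝ) : ℂ) = (algebraMap ℝ ℂ) (MvPolynomial.eval v P) from rfl,
    MvPolynomial.eval, MvPolynomial.coe_eval₂Hom, h]
  rfl

lemma cev_continuous (P : MvPolynomial (Fin N) ℝ) : Continuous (cev P) := by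
  unfold cev
  set Q := MvPolynomial.map (algebraMap ℝ ℂ) P
  have : (fun ζ : Fin N → ℂ => MvPolynomial.eval ζ Q)
      = fun ζ => ∑ d ∈ Q.support, Q.coeff d * ∏ i, ζ i ^ d i := by
    funext ζ; rw [MvPolynomial.eval_eq']
  rw [this]
  refine continuous_finset_sum _ fun d _ => Continuous.mul continuous_const ?_
  exact continuous_finset_prod _ fun i _ => (continuous_apply i).pow _

lemma cev_smul (P : MvPolynomial (Fin N) ℝ) (hhom : P.IsHomogeneous m) (c : ℂ)
    (ζ : Fin N → ℂ) : cev P (fun i => c * ζ i) = c ^ m * cev P ζ := by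
  unfold cev
  have hQ : (MvPolynomial.map (algebraMap ℝ ℂ) P).IsHomogeneous m := hhom.map _
  set Q := MvPolynomial.map (algebraMap ℝ ℂ) P
  rw [MvPolynomial.eval_eq', MvPolynomial.eval_eq', Finset.mul_sum]
  refine Finset.sum_congr rfl fun d hd => ?_
  have hdm : ∑ i, d i = m := by
    have h1 := hQ (MvPolynomial.mem_support_iff.mp hd)
    rw [← h1]
    simp [Finsupp.weight_apply, Finsupp.sum_fintype]
  calc Q.coeff d * ∏ i, (c * ζ i) ^ d i
      = Q.coeff d * ((∏ i, c ^ d i) * ∏ i, ζ i ^ d i) := by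
        rw [← Finset.prod_mul_distrib]; simp [mul_pow]
    _ = c ^ m * (Q.coeff d * ∏ i, ζ i ^ d i) := by
        rw [show (∏ i : Fin N, c ^ d i) = c ^ ∑ i : Fin N, d i from
          (Finset.prod_pow_eq_pow_sum _ _ _), hdm]
        ring

lemma cev_conj (P : MvPolynomial (Fin N) ℝ) (ζ : Fin N → ℂ) :
    cev P (fun i => starRingEnd ℂ (ζ i)) = starRingEnd ℂ (cev P ζ) := by
  unfold cev
  rw [MvPolynomial.eval_map, MvPolynomial.eval_map]
  rw [MvPolynomial.eval₂_comp_left (starRingEnd ℂ) (algebraMap ℝ ℂ) ζ]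
  congr 1
  ext r : 1
  simp [Complex.conj_ofReal]




variable {N m : ℕ}

/-- the univariate polynomial `σ ↦ P(v + σ b)` over `ℂ` -/
def Qp (P : MvPolynomial (Fin N) ℝ) (v b : Fin N → ℂ) : Polynomial ℂ :=
  MvPolynomial.eval₂ Polynomial.C
    (fun i => Polynomial.C (v i) + Polynomial.C (b i) * Polynomial.X)
    (MvPolynomial.map (algebraMap ℝ ℂ) P)

lemma Qp_eval (P : MvPolynomial (Fin N) ℝ) (v b : Fin N → ℂ) (σ : ℂ) :
    (Qp P v b).eval σ = cev P (fun i => v i + σ * b i) := by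
  unfold Qp cev
  have h := MvPolynomial.eval₂_comp_left (Polynomial.evalRingHom σ) Polynomial.C
    (fun i => Polynomial.C (v i) + Polynomial.C (b i) * Polynomial.X)
    (MvPolynomial.map (algebraMap ℝ ℂ) P)
  simp only [Polynomial.coe_evalRingHom] at h
  refine h.trans ?_
  rw [MvPolynomial.eval, MvPolynomial.coe_eval₂Hom]
  congr 1
  · ext z : 1
    simp
  · funext i
    simp only [Function.comp_apply, Polynomial.eval_add, Polynomial.eval_C,
      Polynomial.eval_mul, Polynomial.eval_X]
    ring

lemma coeff_linpow (vv bb : ℂ) (d : ℕ) :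
    ((Polynomial.C vv + Polynomial.C bb * Polynomial.X) ^ d).natDegree ≤ d ∧
    ((Polynomial.C vv + Polynomial.C bb * Polynomial.X) ^ d).coeff d = bb ^ d := by
  have h1 : (Polynomial.C vv + Polynomial.C bb * Polynomial.X).natDegree ≤ 1 := by
    refine (Polynomial.natDegree_add_le _ _).trans ?_
    simp [Polynomial.natDegree_C_mul_le]
    exact (Polynomial.natDegree_C_mul_le bb Polynomial.X).trans (by simp)
  constructor
  · exact (Polynomial.natDegree_pow_le).trans ((Nat.mul_le_mul_left d h1).trans (by omega))
  · have := Polynomial.coeff_pow_of_natDegree_le (m := d) h1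
    rw [mul_one] at this
    rw [this]
    congr 1
    simp

lemma coeff_prod_lin (v b : Fin N → ℂ) (d : Fin N → ℕ) :
    (∏ i, (Polynomial.C (v i) + Polynomial.C (b i) * Polynomial.X) ^ d i).natDegree ≤ (∑ i, d i) ∧
    (∏ i, (Polynomial.C (v i) + Polynomial.C (b i) * Polynomial.X) ^ d i).coeff (∑ i, d i)
      = ∏ i, b i ^ d i := by
  classical
  constructor
  · exact (Polynomial.natDegree_prod_le _ _).trans
      (Finset.sum_le_sum fun i _ => (coeff_linpow (v i) (b i) (d i)).1)
  · induction (Finset.univ : Finset (Fin N)) using Finset.induction_on with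
    | empty => simp
    | insert _ _ hni ih =>
      rename_i j s
      rw [Finset.prod_insert hni, Finset.sum_insert hni, Finset.prod_insert hni,
        Polynomial.coeff_mul_add_eq_of_natDegree_le (coeff_linpow (v j) (b j) (d j)).1
          ((Polynomial.natDegree_prod_le _ _).trans
            (Finset.sum_le_sum fun i _ => (coeff_linpow (v i) (b i) (d i)).1)),
        (coeff_linpow (v j) (b j) (d j)).2, ih]

lemma Qp_natDegree_le (P : MvPolynomial (Fin N) ℝ) (hhom : P.IsHomogeneous m)
    (v b : Fin N → ℂ) : (Qp P v b).natDegree ≤ m := by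
  unfold Qp
  rw [MvPolynomial.eval₂_eq']
  refine Polynomial.natDegree_sum_le_of_forall_le _ _ fun d hd => ?_
  have hdm : ∑ i, d i = m := by
    have h1 := (hhom.map (algebraMap ℝ ℂ)) (MvPolynomial.mem_support_iff.mp hd)
    rw [← h1]; simp [Finsupp.weight_apply, Finsupp.sum_fintype]
  refine (Polynomial.natDegree_C_mul_le _ _).trans ?_
  rw [← hdm]
  exact (coeff_prod_lin v b d).1

lemma Qp_coeff_m (P : MvPolynomial (Fin N) ℝ) (hhom : P.IsHomogeneous m)
    (v b : Fin N → ℂ) : (Qp P v b).coeff m = cev P b := by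
  unfold Qp cev
  rw [MvPolynomial.eval₂_eq', MvPolynomial.eval_eq', Polynomial.finset_sum_coeff]
  refine Finset.sum_congr rfl fun d hd => ?_
  have hdm : ∑ i, d i = m := by
    have h1 := (hhom.map (algebraMap ℝ ℂ)) (MvPolynomial.mem_support_iff.mp hd)
    rw [← h1]; simp [Finsupp.weight_apply, Finsupp.sum_fintype]
  rw [Polynomial.coeff_C_mul, ← hdm, (coeff_prod_lin v b d).2]




lemma lin_eval {R : Type*} [CommSemiring R] {N : ℕ} (p : MvPolynomial (Fin N) R)
    (v b : Fin N → R) (σ : R) :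
    Polynomial.eval σ (MvPolynomial.eval₂ Polynomial.C
      (fun i => Polynomial.C (v i) + Polynomial.C (b i) * Polynomial.X) p)
      = MvPolynomial.eval (fun i => v i + σ * b i) p := by
  have h := MvPolynomial.eval₂_comp_left (Polynomial.evalRingHom σ) Polynomial.C
    (fun i => Polynomial.C (v i) + Polynomial.C (b i) * Polynomial.X) p
  simp only [Polynomial.coe_evalRingHom] at h
  refine h.trans ?_
  rw [MvPolynomial.eval, MvPolynomial.coe_eval₂Hom]
  congr 1
  · ext z : 1
    simp
  · funext i
    simp only [Function.comp_apply, Polynomial.eval_add, Polynomial.eval_C,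
      Polynomial.eval_mul, Polynomial.eval_X]
    ring

lemma fact_Qp {N m : ℕ} (P : MvPolynomial (Fin N) ℝ) (a v : Fin N → ℝ) (μ : Fin m → ℝ)
    (hfac : ∀ s : ℝ, MvPolynomial.eval (fun i => s * a i + v i) P
      = MvPolynomial.eval a P * ∏ j, (s + μ j)) :
    Qp P (fun i => (v i : ℂ)) (fun i => (a i : ℂ))
      = Polynomial.C ((MvPolynomial.eval a P : ℝ) : ℂ)
        * ∏ j, (Polynomial.X + Polynomial.C ((μ j : ℝ) : ℂ)) := by
  set rq : Polynomial ℝ := MvPolynomial.eval₂ Polynomial.C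
    (fun i => Polynomial.C (v i) + Polynomial.C (a i) * Polynomial.X) P with hrq
  have hrqfac : rq = Polynomial.C (MvPolynomial.eval a P)
      * ∏ j, (Polynomial.X + Polynomial.C (μ j)) := by
    apply Polynomial.funext
    intro s
    rw [hrq, lin_eval]
    rw [show (fun i => v i + s * a i) = (fun i => s * a i + v i) by funext i; ring, hfac s]
    simp [Polynomial.eval_prod]
  have hmap : Qp P (fun i => (v i : ℂ)) (fun i => (a i : ℂ))
      = rq.map (algebraMap ℝ ℂ) := by
    rw [hrq]
    unfold Qp
    rw [MvPolynomial.eval₂_map]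
    have h2 := MvPolynomial.eval₂_comp_left (Polynomial.mapRingHom (algebraMap ℝ ℂ))
      Polynomial.C (fun i => Polynomial.C (v i) + Polynomial.C (a i) * Polynomial.X) P
    rw [show (Polynomial.map (algebraMap ℝ ℂ) (MvPolynomial.eval₂ Polynomial.C
      (fun i => Polynomial.C (v i) + Polynomial.C (a i) * Polynomial.X) P))
      = (Polynomial.mapRingHom (algebraMap ℝ ℂ)) (MvPolynomial.eval₂ Polynomial.C
      (fun i => Polynomial.C (v i) + Polynomial.C (a i) * Polynomial.X) P) from rfl, h2]
    congr 1
    · ext r : 1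
      simp
    · funext i
      simp
  rw [hmap, hrqfac]
  simp [Polynomial.map_prod]

lemma cev_adir {N m : ℕ} (P : MvPolynomial (Fin N) ℝ) (a v : Fin N → ℝ) (μ : Fin m → ℝ)
    (hfac : ∀ s : ℝ, MvPolynomial.eval (fun i => s * a i + v i) P
      = MvPolynomial.eval a P * ∏ j, (s + μ j)) (τ : ℂ) :
    cev P (fun i => (v i : ℂ) + τ * (a i : ℂ))
      = ((MvPolynomial.eval a P : ℝ) : ℂ) * ∏ j, (τ + ((μ j : ℝ) : ℂ)) := by
  rw [← Qp_eval, fact_Qp P a v μ hfac]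
  simp [Polynomial.eval_prod]

lemma cev_xdir {N m : ℕ} (P : MvPolynomial (Fin N) ℝ) (hhom : P.IsHomogeneous m)
    (a x : Fin N → ℝ) (μ : Fin m → ℝ)
    (hfac : ∀ s : ℝ, MvPolynomial.eval (fun i => s * a i + x i) P
      = MvPolynomial.eval a P * ∏ j, (s + μ j)) (lam : ℂ) :
    cev P (fun i => lam * (x i : ℂ) + (a i : ℂ))
      = ((MvPolynomial.eval a P : ℝ) : ℂ) * ∏ j, (1 + lam * ((μ j : ℝ) : ℂ)) := by
  rcases eq_or_ne lam 0 with h0 | h0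
  · subst h0
    simpa using cev_real P a
  · have key : (fun i => lam * (x i : ℂ) + (a i : ℂ))
        = fun i => lam * ((x i : ℂ) + lam⁻¹ * (a i : ℂ)) := by
      funext i; field_simp
    rw [key, cev_smul P hhom lam _, cev_adir P a x μ hfac lam⁻¹]
    rw [← mul_assoc, mul_comm (lam ^ m) _, mul_assoc]
    congr 1
    rw [show (lam ^ m : ℂ) = ∏ _j : Fin m, lam by
      simp [Finset.prod_const]]
    rw [← Finset.prod_mul_distrib]
    refine Finset.prod_congr rfl fun j _ => ?_
    field_simp

lemma prod_abs_facts (z : ℂ) (s : Multiset ℂ) :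
    Complex.abs ((s.map fun w => z - w).prod) = ((s.map fun w => Complex.abs (z - w))).prod
    ∧ ∀ c : ℝ, 0 ≤ c → (∀ w ∈ s, c ≤ Complex.abs (z - w)) →
      c ^ (Multiset.card s) ≤ ((s.map fun w => Complex.abs (z - w))).prod := by
  induction s using Multiset.induction_on with
  | empty => simp
  | cons a t ih =>
    constructor
    · simp only [Multiset.map_cons, Multiset.prod_cons, map_mul, ih.1]
    · intro c hc hle
      simp only [Multiset.map_cons, Multiset.prod_cons, Multiset.card_cons, pow_succ]
      rw [mul_comm (c ^ Multiset.card t) c]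
      refine mul_le_mul (hle a (Multiset.mem_cons_self a t)) ?_ (pow_nonneg hc _) ?_
      · exact ih.2 c hc fun w hw => hle w (Multiset.mem_cons_of_mem hw)
      · exact Complex.abs.nonneg _

lemma rc1 {m : ℕ} (hm : 0 < m) (p : Polynomial ℂ) (hdeg : p.natDegree = m) (z : ℂ) :
    ∃ w ∈ p.roots, Complex.abs (z - w) ^ m
      ≤ Complex.abs (p.eval z) / Complex.abs p.leadingCoeff := by
  have hp0 : p ≠ 0 := fun h => by simp [h] at hdeg; omega
  have hsplit : p.Splits := IsAlgClosed.splits p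
  have hcard : Multiset.card p.roots = m := by
    rw [← hdeg]; exact (Polynomial.splits_iff_card_roots.mp hsplit)
  have hfac := hsplit.eq_prod_roots
  have heval : Complex.abs (p.eval z)
      = Complex.abs p.leadingCoeff * ((p.roots.map fun w => Complex.abs (z - w))).prod := by
    conv_lhs => rw [hfac]
    rw [Polynomial.eval_mul, Polynomial.eval_C, map_mul, Polynomial.eval_multiset_prod]
    rw [Multiset.map_map]
    congr 1
    rw [show (Multiset.map (Polynomial.eval z ∘ fun a => Polynomial.X - Polynomial.C a) p.roots)
      = Multiset.map (fun w => z - w) p.roots from Multiset.map_congr rfl (by intros; simp)]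
    exact (prod_abs_facts z p.roots).1
  have hne : p.roots.toFinset.Nonempty := by
    rw [Multiset.toFinset_nonempty]
    intro h
    rw [h] at hcard; simp at hcard; omega
  obtain ⟨w₀, hw₀T, hmin⟩ := p.roots.toFinset.exists_min_image
    (fun w => Complex.abs (z - w)) hne
  refine ⟨w₀, Multiset.mem_toFinset.mp hw₀T, ?_⟩
  have hlc : Complex.abs p.leadingCoeff > 0 := by
    simp [Polynomial.leadingCoeff_ne_zero.mpr hp0, AbsoluteValue.pos_iff]
  rw [le_div_iff₀ hlc]
  have := (prod_abs_facts z p.roots).2 (Complex.abs (z - w₀)) (Complex.abs.nonneg _)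
    (fun w hw => hmin w (Multiset.mem_toFinset.mpr hw))
  rw [hcard] at this
  rw [heval]
  nlinarith [this, Complex.abs.nonneg (z - w₀), pow_nonneg (Complex.abs.nonneg (z - w₀)) m]

lemma exists_rho {N : ℕ} (P : MvPolynomial (Fin N) ℝ) (x : Fin N → ℝ)
    (hx : cev P (fun i => (x i : ℂ)) ≠ 0) :
    ∃ ρ > (0:ℝ), ∀ u : Fin N → ℂ, (∀ i, Complex.abs (u i) ≤ ρ) →
      cev P (fun i => (x i : ℂ) + u i) ≠ 0 := by
  have hcont : ContinuousAt (fun u : Fin N → ℂ => cev P (fun i => (x i : ℂ) + u i)) 0 := by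
    apply Continuous.continuousAt
    exact (cev_continuous P).comp (by fun_prop)
  rw [Metric.continuousAt_iff] at hcont
  obtain ⟨δ, hδ, hball⟩ := hcont (Complex.abs (cev P (fun i => (x i : ℂ)))) (by
    simpa [AbsoluteValue.pos_iff] using hx)
  refine ⟨δ/2, by linarith, fun u hu => ?_⟩
  have hdist : dist u 0 < δ := by
    rcases eq_or_ne N 0 with hN | hN
    · subst hN; simpa [dist] using hδ
    · have h2 : dist u 0 ≤ δ/2 := by
        refine (dist_pi_le_iff (by linarith)).mpr fun i => ?_
        simpa [Complex.dist_eq, Complex.abs_apply] using hu i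
      linarith
  have := hball hdist
  simp only [Pi.zero_apply, add_zero] at this
  intro h0
  rw [h0] at this
  simp [Complex.dist_eq, Complex.abs_apply] at this

lemma Qp_deg_facts {N m : ℕ} (P : MvPolynomial (Fin N) ℝ) (hhom : P.IsHomogeneous m)
    (v : Fin N → ℂ) (x : Fin N → ℝ) (hx : cev P (fun i => (x i : ℂ)) ≠ 0) :
    (Qp P v fun i => (x i : ℂ)).natDegree = m ∧
    (Qp P v fun i => (x i : ℂ)).leadingCoeff = cev P (fun i => (x i : ℂ)) := by
  have hc := Qp_coeff_m P hhom v (fun i => (x i : ℂ))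
  have hle := Qp_natDegree_le P hhom v (fun i => (x i : ℂ))
  have hdeg : (Qp P v fun i => (x i : ℂ)).natDegree = m :=
    le_antisymm hle (Polynomial.le_natDegree_of_ne_zero (by rw [hc]; exact hx))
  exact ⟨hdeg, by rw [Polynomial.leadingCoeff, hdeg, hc]⟩

lemma root_bound {N m : ℕ} (P : MvPolynomial (Fin N) ℝ) (hhom : P.IsHomogeneous m)
    (x : Fin N → ℝ) (ρ : ℝ) (hρ : 0 < ρ)
    (hρx : ∀ u : Fin N → ℂ, (∀ i, Complex.abs (u i) ≤ ρ) →
      cev P (fun i => (x i : ℂ) + u i) ≠ 0)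
    (v : Fin N → ℂ) (C : ℝ) (hC0 : 0 ≤ C) (hC : ∀ i, Complex.abs (v i) ≤ C) (σ : ℂ)
    (hroot : cev P (fun i => v i + σ * (x i : ℂ)) = 0) : Complex.abs σ ≤ C / ρ := by
  by_contra hgt
  push_neg at hgt
  have hσ0 : σ ≠ 0 := by
    intro h; rw [h] at hgt; simp at hgt
    exact absurd (div_nonneg hC0 hρ.le) (not_le.mpr hgt)
  have habs : 0 < Complex.abs σ := by simpa [AbsoluteValue.pos_iff] using hσ0
  have hkey : (fun i => v i + σ * (x i : ℂ)) = fun i => σ * ((x i : ℂ) + σ⁻¹ * v i) := by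
    funext i; field_simp; ring
  rw [hkey, cev_smul P hhom σ] at hroot
  have : cev P (fun i => (x i : ℂ) + σ⁻¹ * v i) ≠ 0 := by
    refine hρx _ fun i => ?_
    rw [map_mul, map_inv₀]
    have h1 : Complex.abs (v i) ≤ C := hC i
    have h2 : C / Complex.abs σ < ρ := by
      rw [div_lt_iff₀ habs]
      have := (div_lt_iff₀ hρ).mp hgt
      linarith [this]
    calc (Complex.abs σ)⁻¹ * Complex.abs (v i) ≤ (Complex.abs σ)⁻¹ * C := by
          exact mul_le_mul_of_nonneg_left h1 (by positivity)
      _ = C / Complex.abs σ := by rw [div_eq_inv_mul]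
      _ ≤ ρ := h2.le
  exact this (by
    have := mul_eq_zero.mp hroot
    rcases this with h | h
    · exact absurd h (pow_ne_zero m hσ0)
    · exact h)

lemma master_lemma {N m : ℕ} (P : MvPolynomial (Fin N) ℝ) (hhom : P.IsHomogeneous m)
    (hm : 0 < m) (x : Fin N → ℝ) (hx : cev P (fun i => (x i : ℂ)) ≠ 0)
    (φ : ℂ → ℝ) (hφ : ∀ z w : ℂ, |φ z - φ w| ≤ Complex.abs (z - w))
    (v : ℝ → Fin N → ℂ) (hv : Continuous v)
    (hbar : ∀ r ∈ Set.Icc (0:ℝ) 1, ∀ σ : ℂ,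
      cev P (fun i => v r i + σ * (x i : ℂ)) = 0 → φ σ ≠ 0)
    (hanc : ∀ σ : ℂ, cev P (fun i => v 0 i + σ * (x i : ℂ)) = 0 → φ σ < 0) :
    ∀ r ∈ Set.Icc (0:ℝ) 1, ∀ σ : ℂ,
      cev P (fun i => v r i + σ * (x i : ℂ)) = 0 → φ σ < 0 := by
  classical
  set lc := cev P (fun i => (x i : ℂ)) with hlcdef
  have hlc : 0 < Complex.abs lc := by simpa [AbsoluteValue.pos_iff] using hx
  obtain ⟨ρ, hρ, hρx⟩ := exists_rho P x hx
  -- bound on the coefficients of v on Icc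
  obtain ⟨r₁, hr₁, hmax⟩ := isCompact_Icc.exists_isMaxOn (Set.nonempty_Icc.mpr zero_le_one)
    ((continuous_dist.comp (hv.prodMk continuous_const)).continuousOn :
      ContinuousOn (fun r => dist (v r) 0) (Set.Icc (0:ℝ) 1))
  set C := max (dist (v r₁) 0) 0 with hCdef
  have hC0 : 0 ≤ C := le_max_right _ _
  have hC : ∀ r ∈ Set.Icc (0:ℝ) 1, ∀ i, Complex.abs (v r i) ≤ C := by
    intro r hr i
    have h1 : dist (v r i) 0 ≤ dist (v r) 0 := dist_le_pi_dist (v r) 0 i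
    have h2 : dist (v r) 0 ≤ dist (v r₁) 0 := hmax hr
    simp only [Complex.dist_eq, sub_zero] at h1
    exact h1.trans (h2.trans (le_max_left _ _))
  set B := C / ρ with hBdef
  have hB0 : 0 ≤ B := div_nonneg hC0 hρ.le
  have hrootB : ∀ r ∈ Set.Icc (0:ℝ) 1, ∀ σ : ℂ,
      cev P (fun i => v r i + σ * (x i : ℂ)) = 0 → Complex.abs σ ≤ B :=
    fun r hr σ hσ => root_bound P hhom x ρ hρ hρx (v r) C hC0 (hC r hr) σ hσ
  -- the evaluation map and its uniform continuity on a compact set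
  set E : ℝ × ℂ → ℂ := fun q => cev P (fun i => v q.1 i + q.2 * (x i : ℂ)) with hEdef
  have hE : Continuous E := by
    apply (cev_continuous P).comp
    refine continuous_pi fun i => ?_
    exact ((continuous_apply i).comp (hv.comp continuous_fst)).add
      (continuous_snd.mul continuous_const)
  set K : Set (ℝ × ℂ) := (Set.Icc (0:ℝ) 1) ×ˢ (Metric.closedBall (0:ℂ) (B+1)) with hKdef
  have hK : IsCompact K := isCompact_Icc.prod (isCompact_closedBall _ _)
  have hUC := hK.uniformContinuousOn_of_continuous hE.continuousOn
  rw [Metric.uniformContinuousOn_iff] at hUC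
  -- degrees
  have hdeg : ∀ w : Fin N → ℂ, (Qp P w fun i => (x i : ℂ)).natDegree = m :=
    fun w => (Qp_deg_facts P hhom w x hx).1
  have hlead : ∀ w : Fin N → ℂ, (Qp P w fun i => (x i : ℂ)).leadingCoeff = lc :=
    fun w => (Qp_deg_facts P hhom w x hx).2
  have hpne : ∀ w : Fin N → ℂ, Qp P w (fun i => (x i : ℂ)) ≠ 0 := fun w h0 => by
    have := hdeg w
    rw [h0, Polynomial.natDegree_zero] at this
    omega
  -- the subtype of the interval
  haveI : PreconnectedSpace (Set.Icc (0:ℝ) 1) := Subtype.preconnectedSpace isPreconnected_Icc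
  set S : Set (Set.Icc (0:ℝ) 1) :=
    {r | ∀ σ : ℂ, cev P (fun i => v r.1 i + σ * (x i : ℂ)) = 0 → φ σ < 0} with hSdef
  have hmem : ∀ (r : Set.Icc (0:ℝ) 1) (σ : ℂ), (Qp P (v r.1) fun i => (x i : ℂ)).eval σ
      = cev P (fun i => v r.1 i + σ * (x i : ℂ)) := fun r σ => Qp_eval P (v r.1) _ σ
  have hopen : IsOpen S := by
    rw [Metric.isOpen_iff]
    intro r₀ hr₀
    -- maximum of φ over the roots
    set p₀ := Qp P (v r₀.1) (fun i => (x i : ℂ)) with hp₀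
    have hp₀ne : p₀.roots.toFinset.Nonempty := by
      rw [Multiset.toFinset_nonempty]
      intro hempty
      have hcard : Multiset.card p₀.roots = m := by
        rw [← hdeg (v r₀.1)]
        exact Polynomial.splits_iff_card_roots.mp (IsAlgClosed.splits p₀)
      rw [hempty] at hcard; simp at hcard; omega
    obtain ⟨w₁, hw₁, hw₁max⟩ := p₀.roots.toFinset.exists_max_image φ hp₀ne
    have hw₁root : cev P (fun i => v r₀.1 i + w₁ * (x i : ℂ)) = 0 := by
      rw [← hmem r₀ w₁]
      exact (Polynomial.mem_roots (hpne _)).mp (Multiset.mem_toFinset.mp hw₁)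
    have hθ : φ w₁ < 0 := hr₀ w₁ hw₁root
    set θ := φ w₁ with hθdef
    have hε : 0 < Complex.abs lc * (-θ/2)^m := mul_pos hlc (pow_pos (by linarith) m)
    obtain ⟨δ, hδ, hδspec⟩ := hUC _ hε
    refine ⟨δ, hδ, fun r hrball => ?_⟩
    intro σ hσroot
    have hσB : Complex.abs σ ≤ B := hrootB r.1 r.2 σ hσroot
    have hmemK1 : ((r.1 : ℝ), σ) ∈ K := by
      constructor
      · exact r.2
      · simp [Metric.mem_closedBall, Complex.dist_eq]
        linarith [hσB, (Complex.abs_apply σ).ge]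
    have hmemK0 : ((r₀.1 : ℝ), σ) ∈ K := by
      constructor
      · exact r₀.2
      · simp [Metric.mem_closedBall, Complex.dist_eq]
        linarith [hσB, (Complex.abs_apply σ).ge]
    have hdistK : dist ((r.1 : ℝ), σ) ((r₀.1 : ℝ), σ) < δ := by
      have he : dist ((r.1 : ℝ), σ) ((r₀.1 : ℝ), σ) = dist (r.1 : ℝ) (r₀.1 : ℝ) := by
        rw [Prod.dist_eq]
        simp [dist_self, max_eq_left dist_nonneg]
      rw [he]
      have := Metric.mem_ball.mp hrball
      rw [Subtype.dist_eq] at this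
      exact this
    have hclose := hδspec _ hmemK1 _ hmemK0 hdistK
    have heval : Complex.abs (p₀.eval σ) < Complex.abs lc * (-θ/2)^m := by
      rw [hmem r₀ σ]
      calc Complex.abs (cev P (fun i => v r₀.1 i + σ * (x i : ℂ)))
          = dist (E (r.1, σ)) (E (r₀.1, σ)) := by
            rw [Complex.dist_eq]
            show Complex.abs (cev P (fun i => v r₀.1 i + σ * (x i : ℂ)))
              = Complex.abs ((cev P fun i => v r.1 i + σ * (x i : ℂ))
                - (cev P fun i => v r₀.1 i + σ * (x i : ℂ)))
            rw [hσroot, zero_sub, map_neg_eq_map]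
        _ < _ := hclose
    obtain ⟨w, hwroot, hwdist⟩ := rc1 hm p₀ (hdeg (v r₀.1)) σ
    rw [hlead (v r₀.1)] at hwdist
    have hwd : Complex.abs (σ - w) ^ m < (-θ/2)^m := by
      refine lt_of_le_of_lt hwdist ?_
      rw [div_lt_iff₀ hlc]
      linarith [heval]
    have habs : Complex.abs (σ - w) < -θ/2 :=
      lt_of_pow_lt_pow_left₀ m (by linarith) hwd
    have hφw : φ w ≤ θ := hw₁max w (Multiset.mem_toFinset.mpr hwroot)
    have := hφ σ w
    have h2 : φ σ - φ w ≤ Complex.abs (σ - w) := (abs_le.mp this).2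
    linarith
  have hclosed : IsClosed S := by
    rw [← isOpen_compl_iff, Metric.isOpen_iff]
    intro r₀ hr₀
    simp only [Set.mem_compl_iff, hSdef, Set.mem_setOf_eq, not_forall] at hr₀
    obtain ⟨σ₀, hσ₀root, hσ₀φ⟩ := hr₀
    have hφpos : 0 < φ σ₀ := by
      rcases lt_trichotomy (φ σ₀) 0 with h | h | h
      · exact absurd h hσ₀φ
      · exact absurd h (hbar r₀.1 r₀.2 σ₀ hσ₀root)
      · exact h
    have hσ₀B : Complex.abs σ₀ ≤ B := hrootB r₀.1 r₀.2 σ₀ hσ₀root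
    have hε : 0 < Complex.abs lc * (φ σ₀/2)^m := mul_pos hlc (pow_pos (by linarith) m)
    obtain ⟨δ, hδ, hδspec⟩ := hUC _ hε
    refine ⟨δ, hδ, fun r hrball => ?_⟩
    simp only [Set.mem_compl_iff, hSdef, Set.mem_setOf_eq, not_forall]
    set pr := Qp P (v r.1) (fun i => (x i : ℂ)) with hpr
    have hmemK1 : ((r.1 : ℝ), σ₀) ∈ K := ⟨r.2, by
      simp [Metric.mem_closedBall, Complex.dist_eq]; linarith [hσ₀B, (Complex.abs_apply σ₀).ge]⟩
    have hmemK0 : ((r₀.1 : ℝ), σ₀) ∈ K := ⟨r₀.2, by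
      simp [Metric.mem_closedBall, Complex.dist_eq]; linarith [hσ₀B, (Complex.abs_apply σ₀).ge]⟩
    have hdistK : dist ((r.1 : ℝ), σ₀) ((r₀.1 : ℝ), σ₀) < δ := by
      have he : dist ((r.1 : ℝ), σ₀) ((r₀.1 : ℝ), σ₀) = dist (r.1 : ℝ) (r₀.1 : ℝ) := by
        rw [Prod.dist_eq]
        simp [dist_self, max_eq_left dist_nonneg]
      rw [he]
      have := Metric.mem_ball.mp hrball
      rw [Subtype.dist_eq] at this
      exact this
    have hclose := hδspec _ hmemK1 _ hmemK0 hdistK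
    have heval : Complex.abs (pr.eval σ₀) < Complex.abs lc * (φ σ₀/2)^m := by
      rw [hmem r σ₀]
      calc Complex.abs (cev P (fun i => v r.1 i + σ₀ * (x i : ℂ)))
          = dist (E (r.1, σ₀)) (E (r₀.1, σ₀)) := by
            rw [Complex.dist_eq]
            show Complex.abs (cev P (fun i => v r.1 i + σ₀ * (x i : ℂ)))
              = Complex.abs ((cev P fun i => v r.1 i + σ₀ * (x i : ℂ))
                - (cev P fun i => v r₀.1 i + σ₀ * (x i : ℂ)))
            rw [hσ₀root, sub_zero]
        _ < _ := hclose
    obtain ⟨w, hwroot, hwdist⟩ := rc1 hm pr (hdeg (v r.1)) σ₀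
    rw [hlead (v r.1)] at hwdist
    have hwd : Complex.abs (σ₀ - w) ^ m < (φ σ₀/2)^m := by
      refine lt_of_le_of_lt hwdist ?_
      rw [div_lt_iff₀ hlc]
      linarith [heval]
    have habs : Complex.abs (σ₀ - w) < φ σ₀/2 :=
      lt_of_pow_lt_pow_left₀ m (by linarith) hwd
    refine ⟨w, ?_, ?_⟩
    · rw [← hmem r w]
      exact (Polynomial.mem_roots (hpne _)).mp hwroot
    · intro hlt
      have := hφ σ₀ w
      have h2 : φ σ₀ - φ w ≤ Complex.abs (σ₀ - w) := (abs_le.mp this).2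
      linarith
  have hne : S.Nonempty := ⟨⟨0, Set.mem_Icc.mpr ⟨le_refl 0, zero_le_one⟩⟩, fun σ hσ => hanc σ hσ⟩
  have huniv : S = Set.univ := IsClopen.eq_univ ⟨hclosed, hopen⟩ hne
  intro r hr σ hσ
  have : (⟨r, hr⟩ : Set.Icc (0:ℝ) 1) ∈ S := by rw [huniv]; trivial
  exact this σ hσ

lemma limit_lemma {N m : ℕ} (P : MvPolynomial (Fin N) ℝ) (hhom : P.IsHomogeneous m)
    (hm : 0 < m) (x : Fin N → ℝ) (hx : cev P (fun i => (x i : ℂ)) ≠ 0)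
    (φ : ℂ → ℝ) (hφ : ∀ z w : ℂ, |φ z - φ w| ≤ Complex.abs (z - w))
    (v : ℝ → Fin N → ℂ) (hv : Continuous v)
    (hneg : ∀ s ∈ Set.Ioc (0:ℝ) 1, ∀ σ : ℂ,
      cev P (fun i => v s i + σ * (x i : ℂ)) = 0 → φ σ < 0)
    (z₀ : ℂ) (hz : 0 < φ z₀) :
    cev P (fun i => v 0 i + z₀ * (x i : ℂ)) ≠ 0 := by
  intro h0
  set lc := cev P (fun i => (x i : ℂ)) with hlcdef
  have hlc : 0 < Complex.abs lc := by simpa [AbsoluteValue.pos_iff] using hx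
  have hcont : ContinuousAt (fun s : ℝ => cev P (fun i => v s i + z₀ * (x i : ℂ))) 0 := by
    apply Continuous.continuousAt
    apply (cev_continuous P).comp
    exact continuous_pi fun i => ((continuous_apply i).comp hv).add continuous_const
  rw [Metric.continuousAt_iff] at hcont
  obtain ⟨δ, hδ, hball⟩ := hcont (Complex.abs lc * (φ z₀)^m)
    (mul_pos hlc (pow_pos hz m))
  set s := min (δ/2) 1 with hsdef
  have hs0 : 0 < s := lt_min (by linarith) one_pos
  have hs1 : s ≤ 1 := min_le_right _ _
  have hsδ : dist s (0:ℝ) < δ := by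
    rw [Real.dist_eq, sub_zero, abs_of_pos hs0]
    calc s ≤ δ/2 := min_le_left _ _
      _ < δ := by linarith
  have hfs := hball hsδ
  rw [h0] at hfs
  have habs : Complex.abs (cev P (fun i => v s i + z₀ * (x i : ℂ)))
      < Complex.abs lc * (φ z₀)^m := by
    rw [Complex.dist_eq, sub_zero] at hfs
    exact hfs
  obtain ⟨w, hwroot, hwdist⟩ := rc1 hm (Qp P (v s) fun i => (x i : ℂ))
    ((Qp_deg_facts P hhom (v s) x hx).1) z₀
  rw [(Qp_deg_facts P hhom (v s) x hx).2, Qp_eval] at hwdist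
  have hwd : Complex.abs (z₀ - w) ^ m < (φ z₀)^m := by
    refine lt_of_le_of_lt hwdist ?_
    rw [div_lt_iff₀ hlc]
    linarith [habs]
  have habs2 : Complex.abs (z₀ - w) < φ z₀ := lt_of_pow_lt_pow_left₀ m hz.le hwd
  have hwcev : cev P (fun i => v s i + w * (x i : ℂ)) = 0 := by
    rw [← Qp_eval]
    exact (Polynomial.mem_roots (fun hq0 => by
      have := (Qp_deg_facts P hhom (v s) x hx).1
      rw [hq0, Polynomial.natDegree_zero] at this; omega)).mp hwroot
  have hφw : φ w < 0 := hneg s ⟨hs0, hs1⟩ w hwcev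
  have h2 : φ z₀ - φ w ≤ Complex.abs (z₀ - w) := (abs_le.mp (hφ z₀ w)).2
  linarith

lemma eval_smul_hom {R : Type*} [CommSemiring R] {N m : ℕ} (p : MvPolynomial (Fin N) R)
    (hp : p.IsHomogeneous m) (c : R) (ζ : Fin N → R) :
    MvPolynomial.eval (fun i => c * ζ i) p = c ^ m * MvPolynomial.eval ζ p := by
  rw [MvPolynomial.eval_eq', MvPolynomial.eval_eq', Finset.mul_sum]
  refine Finset.sum_congr rfl fun d hd => ?_
  have hdm : ∑ i, d i = m := by
    have h1 := hp (MvPolynomial.mem_support_iff.mp hd)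
    rw [← h1]
    simp [Finsupp.weight_apply, Finsupp.sum_fintype]
  calc p.coeff d * ∏ i, (c * ζ i) ^ d i
      = p.coeff d * ((∏ i, c ^ d i) * ∏ i, ζ i ^ d i) := by
        rw [← Finset.prod_mul_distrib]; simp [mul_pow]
    _ = c ^ m * (p.coeff d * ∏ i, ζ i ^ d i) := by
        rw [show (∏ i : Fin N, c ^ d i) = c ^ ∑ i : Fin N, d i from
          (Finset.prod_pow_eq_pow_sum _ _ _), hdm]
        ring

section Steps
variable {N m : ℕ} (P : MvPolynomial (Fin N) ℝ) (a x : Fin N → ℝ)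

lemma step_A (hhom : P.IsHomogeneous m) (hm : 0 < m)
    (hPa : 0 < MvPolynomial.eval a P)
    (hypF : ∀ v : Fin N → ℝ, ∃ μ : Fin m → ℝ, ∀ s : ℝ,
      MvPolynomial.eval (fun i => s * a i + v i) P
        = MvPolynomial.eval a P * ∏ j, (s + μ j))
    (μx : Fin m → ℝ)
    (hfx : ∀ s : ℝ, MvPolynomial.eval (fun i => s * a i + x i) P
      = MvPolynomial.eval a P * ∏ j, (s + μx j))
    (hμx : ∀ j, 0 < μx j)
    (hxc : cev P (fun i => (x i : ℂ)) ≠ 0) :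
    ∀ u : Fin N → ℝ, ∀ σ : ℂ,
      cev P (fun i => ((u i : ℝ) : ℂ) + Complex.I * (a i : ℂ) + σ * (x i : ℂ)) = 0 →
      σ.im < 0 := by
  intro u σ₂ hroot
  have hφim : ∀ z w : ℂ, |z.im - w.im| ≤ Complex.abs (z - w) := by
    intro z w; rw [← Complex.sub_im]; exact Complex.abs_im_le_norm _
  have hkey := master_lemma P hhom hm x hxc Complex.im hφim
    (fun r => fun i => ((r * u i : ℝ) : ℂ) + Complex.I * (a i : ℂ))
    (by
      refine continuous_pi fun i => Continuous.add ?_ continuous_const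
      exact Complex.continuous_ofReal.comp (continuous_id.mul continuous_const))
    (by
      -- barrier : no real roots
      rintro r hr σ hσ him0
      have hσre : σ = ((σ.re : ℝ) : ℂ) := Complex.ext rfl (by simpa using him0)
      rw [hσre] at hσ
      obtain ⟨ν, hν⟩ := hypF (fun i => r * u i + σ.re * x i)
      have hpt : (fun i => (((r * u i : ℝ)) : ℂ) + Complex.I * (a i : ℂ)
            + ((σ.re : ℝ) : ℂ) * (x i : ℂ))
          = fun i => (((r * u i + σ.re * x i : ℝ)) : ℂ) + Complex.I * (a i : ℂ) := by
        funext i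
        push_cast
        ring
      rw [hpt, cev_adir P a _ ν hν Complex.I] at hσ
      rcases mul_eq_zero.mp hσ with h | h
      · exact (by exact_mod_cast hPa.ne' : ((MvPolynomial.eval a P : ℝ) : ℂ) ≠ 0) h
      · obtain ⟨j, _, hj⟩ := Finset.prod_eq_zero_iff.mp h
        have := congrArg Complex.im hj
        simp at this
      )
    (by
      -- anchor at r = 0
      intro σ hσ
      have hpt : (fun i => (((0 * u i : ℝ)) : ℂ) + Complex.I * (a i : ℂ) + σ * (x i : ℂ))
          = fun i => Complex.I * ((-Complex.I * σ) * (x i : ℂ) + (a i : ℂ)) := by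
        funext i
        push_cast
        linear_combination (σ * ((x i : ℝ) : ℂ)) * Complex.I_sq
      rw [hpt, cev_smul P hhom Complex.I, cev_xdir P hhom a x μx hfx (-Complex.I * σ)] at hσ
      have hI : (Complex.I : ℂ) ^ m ≠ 0 := pow_ne_zero m Complex.I_ne_zero
      have h2 : ((MvPolynomial.eval a P : ℝ) : ℂ) * ∏ j, (1 + -Complex.I * σ * ((μx j : ℝ) : ℂ)) = 0 := by
        rcases mul_eq_zero.mp hσ with h | h
        · exact absurd h hI
        · exact h
      rcases mul_eq_zero.mp h2 with h | h
      · exact absurd h (by exact_mod_cast hPa.ne')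
      · obtain ⟨j, _, hj⟩ := Finset.prod_eq_zero_iff.mp h
        have hre := congrArg Complex.re hj
        simp [Complex.mul_re, Complex.mul_im] at hre
        nlinarith [hμx j, hre])
  have := hkey 1 (Set.mem_Icc.mpr ⟨zero_le_one, le_refl 1⟩) σ₂ (by
    convert hroot using 2
    funext i
    norm_num)
  exact this

lemma step_C (hhom : P.IsHomogeneous m) (hm : 0 < m)
    (hPa : 0 < MvPolynomial.eval a P)
    (hypF : ∀ v : Fin N → ℝ, ∃ μ : Fin m → ℝ, ∀ s : ℝ,
      MvPolynomial.eval (fun i => s * a i + v i) P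
        = MvPolynomial.eval a P * ∏ j, (s + μ j))
    (μx : Fin m → ℝ)
    (hfx : ∀ s : ℝ, MvPolynomial.eval (fun i => s * a i + x i) P
      = MvPolynomial.eval a P * ∏ j, (s + μx j))
    (hμx : ∀ j, 0 < μx j)
    (hxc : cev P (fun i => (x i : ℂ)) ≠ 0) :
    ∀ u : Fin N → ℝ, cev P (fun i => ((u i : ℝ) : ℂ) + Complex.I * (x i : ℂ)) ≠ 0 := by
  intro u
  -- step B : scaled version of step A
  have stepB : ∀ (w : Fin N → ℝ) (s : ℝ), 0 < s → ∀ σ : ℂ,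
      cev P (fun i => ((w i : ℝ) : ℂ) + σ * (x i : ℂ) + (s : ℂ) * Complex.I * (a i : ℂ)) = 0 →
      σ.im < 0 := by
    intro w s hs σ hroot
    have hs0 : ((s : ℝ) : ℂ) ≠ 0 := by exact_mod_cast hs.ne'
    have hpt : (fun i => ((w i : ℝ) : ℂ) + σ * (x i : ℂ) + (s : ℂ) * Complex.I * (a i : ℂ))
        = fun i => (s : ℂ) * (((w i / s : ℝ) : ℂ) + Complex.I * (a i : ℂ) + (σ / s) * (x i : ℂ)) := by
      funext i
      push_cast
      field_simp
      ring
    rw [hpt, cev_smul P hhom] at hroot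
    have hin := step_A P a x hhom hm hPa hypF μx hfx hμx hxc (fun i => w i / s) (σ / s)
      (by
        rcases mul_eq_zero.mp hroot with h | h
        · exact absurd h (pow_ne_zero m hs0)
        · exact h)
    have hστ : σ = ((s : ℝ) : ℂ) * (σ / s) := by field_simp
    have hσeq : σ.im = s * (σ / s).im := by
      conv_lhs => rw [hστ]
      simp [Complex.mul_im]
    rw [hσeq]
    exact mul_neg_of_pos_of_neg hs hin
  -- limit s → 0
  have hres := limit_lemma P hhom hm x hxc Complex.im
    (by intro z w; rw [← Complex.sub_im]; exact Complex.abs_im_le_norm _)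
    (fun s => fun i => ((u i : ℝ) : ℂ) + ((s : ℝ) : ℂ) * Complex.I * (a i : ℂ))
    (by
      refine continuous_pi fun i => Continuous.add continuous_const ?_
      exact Continuous.mul (Continuous.mul (Complex.continuous_ofReal.comp continuous_id)
        continuous_const) continuous_const)
    (by
      intro s hs σ hroot
      refine stepB u s hs.1 σ ?_
      convert hroot using 2
      funext i
      ring)
    Complex.I (by simp)
  intro h0
  apply hres
  convert h0 using 2
  funext i
  norm_num

lemma step_D (hhom : P.IsHomogeneous m) (hm : 0 < m)
    (hPa : 0 < MvPolynomial.eval a P)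
    (hypF : ∀ v : Fin N → ℝ, ∃ μ : Fin m → ℝ, ∀ s : ℝ,
      MvPolynomial.eval (fun i => s * a i + v i) P
        = MvPolynomial.eval a P * ∏ j, (s + μ j))
    (μx : Fin m → ℝ)
    (hfx : ∀ s : ℝ, MvPolynomial.eval (fun i => s * a i + x i) P
      = MvPolynomial.eval a P * ∏ j, (s + μx j))
    (hμx : ∀ j, 0 < μx j)
    (hxc : cev P (fun i => (x i : ℂ)) ≠ 0) :
    ∀ (u : Fin N → ℝ) (β : ℝ), β ≠ 0 →
      cev P (fun i => ((u i : ℝ) : ℂ) + (Complex.I * (β : ℂ)) * (x i : ℂ)) ≠ 0 := by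
  have main : ∀ (u : Fin N → ℝ) (β : ℝ), 0 < β →
      cev P (fun i => ((u i : ℝ) : ℂ) + (Complex.I * (β : ℂ)) * (x i : ℂ)) ≠ 0 := by
    intro u β hβ
    have hβ0 : ((β : ℝ) : ℂ) ≠ 0 := by exact_mod_cast hβ.ne'
    have hpt : (fun i => ((u i : ℝ) : ℂ) + (Complex.I * (β : ℂ)) * (x i : ℂ))
        = fun i => (β : ℂ) * (((u i / β : ℝ) : ℂ) + Complex.I * (x i : ℂ)) := by
      funext i
      push_cast
      field_simp
    rw [hpt, cev_smul P hhom]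
    exact mul_ne_zero (pow_ne_zero m hβ0)
      (step_C P a x hhom hm hPa hypF μx hfx hμx hxc (fun i => u i / β))
  intro u β hβ
  rcases hβ.lt_or_gt with h | h
  · intro h0
    have hconj : cev P (fun i => starRingEnd ℂ (((u i : ℝ) : ℂ)
        + (Complex.I * (β : ℂ)) * (x i : ℂ))) = 0 := by
      rw [cev_conj, h0, map_zero]
    have hpt : (fun i => starRingEnd ℂ (((u i : ℝ) : ℂ) + (Complex.I * (β : ℂ)) * (x i : ℂ)))
        = fun i => ((u i : ℝ) : ℂ) + (Complex.I * ((-β : ℝ) : ℂ)) * (x i : ℂ) := by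
      funext i
      simp [map_add, map_mul, Complex.conj_ofReal, Complex.conj_I]
    rw [hpt] at hconj
    exact main u (-β) (by linarith) hconj
  · exact main u β h
end Steps

section Key
variable {N m : ℕ} (P : MvPolynomial (Fin N) ℝ) (a x z : Fin N → ℝ)

lemma seg_fact (hhom : P.IsHomogeneous m) (μz : Fin m → ℝ)
    (hfz : ∀ s : ℝ, MvPolynomial.eval (fun i => s * a i + z i) P
      = MvPolynomial.eval a P * ∏ j, (s + μz j))
    (r : ℝ) (hr : 0 ≤ r) (s : ℝ) :
    MvPolynomial.eval (fun i => s * a i + ((1-r) * a i + r * z i)) P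
      = MvPolynomial.eval a P * ∏ j, (s + ((1-r) + r * μz j)) := by
  rcases eq_or_lt_of_le hr with h0 | hpos
  · subst h0
    have hpt : (fun i => s * a i + ((1-0) * a i + 0 * z i)) = fun i => (s+1) * a i := by
      funext i; ring
    rw [hpt, eval_smul_hom P hhom (s+1) a]
    have : ∀ j : Fin m, s + ((1-(0:ℝ)) + 0 * μz j) = s + 1 := fun j => by ring
    rw [Finset.prod_congr rfl fun j _ => this j, Finset.prod_const]
    simp [mul_comm]
  · have hpt : (fun i => s * a i + ((1-r) * a i + r * z i))
        = fun i => r * (((s+1-r)/r) * a i + z i) := by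
      funext i; field_simp; ring
    rw [hpt, eval_smul_hom P hhom r, hfz ((s+1-r)/r)]
    rw [show (r:ℝ)^m = ∏ _j : Fin m, r by simp [Finset.prod_const], ← mul_assoc,
      mul_comm _ (MvPolynomial.eval a P), mul_assoc, ← Finset.prod_mul_distrib]
    congr 1
    refine Finset.prod_congr rfl fun j _ => ?_
    field_simp
    ring

lemma seg_pos (hhom : P.IsHomogeneous m) (hPa : 0 < MvPolynomial.eval a P)
    (μz : Fin m → ℝ)
    (hfz : ∀ s : ℝ, MvPolynomial.eval (fun i => s * a i + z i) P
      = MvPolynomial.eval a P * ∏ j, (s + μz j))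
    (hμz : ∀ j, 0 < μz j) (r : ℝ) (hr0 : 0 ≤ r) (hr1 : r ≤ 1) :
    0 < MvPolynomial.eval (fun i => (1-r) * a i + r * z i) P := by
  have h := seg_fact P a z hhom μz hfz r hr0 0
  have hpt : (fun i => (0:ℝ) * a i + ((1-r) * a i + r * z i))
      = fun i => (1-r) * a i + r * z i := by funext i; ring
  rw [hpt] at h
  rw [h]
  refine mul_pos hPa (Finset.prod_pos fun j _ => ?_)
  rcases eq_or_lt_of_le hr0 with h0 | hpos
  · subst h0; simp
  · have : 0 < r * μz j := mul_pos hpos (hμz j)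
    nlinarith

lemma key_neg (hhom : P.IsHomogeneous m) (hm : 0 < m)
    (hPa : 0 < MvPolynomial.eval a P)
    (hypF : ∀ v : Fin N → ℝ, ∃ μ : Fin m → ℝ, ∀ s : ℝ,
      MvPolynomial.eval (fun i => s * a i + v i) P
        = MvPolynomial.eval a P * ∏ j, (s + μ j))
    (μx : Fin m → ℝ)
    (hfx : ∀ s : ℝ, MvPolynomial.eval (fun i => s * a i + x i) P
      = MvPolynomial.eval a P * ∏ j, (s + μx j))
    (hμx : ∀ j, 0 < μx j)
    (hxc : cev P (fun i => (x i : ℂ)) ≠ 0)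
    (μz : Fin m → ℝ)
    (hfz : ∀ s : ℝ, MvPolynomial.eval (fun i => s * a i + z i) P
      = MvPolynomial.eval a P * ∏ j, (s + μz j))
    (hμz : ∀ j, 0 < μz j) :
    ∀ σ : ℂ, cev P (fun i => (z i : ℂ) + σ * (x i : ℂ)) = 0 → σ.re < 0 := by
  intro σ₂ hroot
  have hφre : ∀ zz w : ℂ, |zz.re - w.re| ≤ Complex.abs (zz - w) := by
    intro zz w; rw [← Complex.sub_re]; exact Complex.abs_re_le_norm _
  have hkey := master_lemma P hhom hm x hxc Complex.re hφre
    (fun r => fun i => (((1-r) * a i + r * z i : ℝ) : ℂ))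
    (by
      refine continuous_pi fun i => Complex.continuous_ofReal.comp ?_
      exact ((continuous_const.sub continuous_id).mul continuous_const).add
        (continuous_id.mul continuous_const))
    (by
      rintro r hr σ hσ hre0
      rcases eq_or_ne σ.im 0 with him | him
      · -- σ = 0, but P(v r) ≠ 0
        have hσ0 : σ = 0 := Complex.ext (by simpa using hre0) (by simpa using him)
        rw [hσ0] at hσ
        have hpt : (fun i => (((1-r) * a i + r * z i : ℝ) : ℂ) + 0 * (x i : ℂ))
            = fun i => (((1-r) * a i + r * z i : ℝ) : ℂ) := by funext i; ring
        rw [hpt, cev_real] at hσ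
        have := seg_pos P a z hhom hPa μz hfz hμz r hr.1 hr.2
        exact absurd hσ (by exact_mod_cast this.ne')
      · -- σ purely imaginary nonzero
        have hσI : σ = Complex.I * ((σ.im : ℝ) : ℂ) := by
          apply Complex.ext
          · simpa using hre0
          · simp
        rw [hσI] at hσ
        exact step_D P a x hhom hm hPa hypF μx hfx hμx hxc
          (fun i => (1-r) * a i + r * z i) σ.im him hσ)
    (by
      intro σ hσ
      have hpt : (fun i => (((1-(0:ℝ)) * a i + 0 * z i : ℝ) : ℂ) + σ * (x i : ℂ))
          = fun i => σ * (x i : ℂ) + (a i : ℂ) := by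
        funext i; push_cast; ring
      rw [hpt, cev_xdir P hhom a x μx hfx σ] at hσ
      rcases mul_eq_zero.mp hσ with h | h
      · exact absurd h (by exact_mod_cast hPa.ne')
      · obtain ⟨j, _, hj⟩ := Finset.prod_eq_zero_iff.mp h
        have hre := congrArg Complex.re hj
        simp [Complex.mul_re] at hre
        nlinarith [hμx j, hre])
  have := hkey 1 (Set.mem_Icc.mpr ⟨zero_le_one, le_refl 1⟩) σ₂ (by
    convert hroot using 2
    funext i
    norm_num)
  exact this

lemma key_real (hhom : P.IsHomogeneous m) (hm : 0 < m)
    (hPa : 0 < MvPolynomial.eval a P)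
    (hypF : ∀ v : Fin N → ℝ, ∃ μ : Fin m → ℝ, ∀ s : ℝ,
      MvPolynomial.eval (fun i => s * a i + v i) P
        = MvPolynomial.eval a P * ∏ j, (s + μ j))
    (μx : Fin m → ℝ)
    (hfx : ∀ s : ℝ, MvPolynomial.eval (fun i => s * a i + x i) P
      = MvPolynomial.eval a P * ∏ j, (s + μx j))
    (hμx : ∀ j, 0 < μx j)
    (μz : Fin m → ℝ)
    (hfz : ∀ s : ℝ, MvPolynomial.eval (fun i => s * a i + z i) P
      = MvPolynomial.eval a P * ∏ j, (s + μz j))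
    (hμz : ∀ j, 0 < μz j) :
    ∀ σ : ℝ, 0 ≤ σ → MvPolynomial.eval (fun i => σ * x i + z i) P ≠ 0 := by
  have hPx : 0 < MvPolynomial.eval x P := by
    have := hfx 0
    have hpt : (fun i => (0:ℝ) * a i + x i) = x := by funext i; ring
    rw [hpt] at this
    rw [this]
    exact mul_pos hPa (Finset.prod_pos fun j _ => by simpa using hμx j)
  have hxc : cev P (fun i => (x i : ℂ)) ≠ 0 := by
    rw [cev_real]
    exact_mod_cast hPx.ne'
  intro σ hσ h0
  have hcev : cev P (fun i => (z i : ℂ) + ((σ : ℝ) : ℂ) * (x i : ℂ)) = 0 := by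
    have hpt : (fun i => (z i : ℂ) + ((σ : ℝ) : ℂ) * (x i : ℂ))
        = fun i => ((σ * x i + z i : ℝ) : ℂ) := by
      funext i; push_cast; ring
    rw [hpt, cev_real, h0]
    simp
  have := key_neg P a x z hhom hm hPa hypF μx hfx hμx hxc μz hfz hμz _ hcev
  simp at this
  linarith
end Key

end GardingAux

/-- Gårding: for a hyperbolic polynomial `P` of degree `m > 1` at `a` with `P(a) > 0`,
the function `h(a,x) = min_k μ_k(a,x)` is positively homogeneous and superadditive,
hence the Gårding cone `{x : h(a,x) > 0}` is convex. -/
theorem garding_h_superadditive (N m : ℕ) (hm : 1 < m)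
    (P : MvPolynomial (Fin N) ℝ) (a : Fin N → ℝ)
    (hhom : P.IsHomogeneous m) (hPa : 0 < eval a P)
    (hyp : ∀ x : Fin N → ℝ, ∃ μ : Fin m → ℝ, ∀ s : ℝ,
      eval (fun i => s * a i + x i) P = eval a P * ∏ j, (s + μ j))
    (h : (Fin N → ℝ) → ℝ)
    (hh : ∀ x : Fin N → ℝ, ∀ μ : Fin m → ℝ,
      (∀ s : ℝ, eval (fun i => s * a i + x i) P = eval a P * ∏ j, (s + μ j)) →
      h x = ⨅ j, μ j) :
    (∀ x : Fin N → ℝ, ∀ s : ℝ, 0 ≤ s → h (s • x) = s * h x) ∧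
      (∀ x y : Fin N → ℝ, h x + h y ≤ h (x + y)) ∧
      Convex ℝ {x : Fin N → ℝ | 0 < h x} := by
  have hm0 : 0 < m := by omega
  haveI : Nonempty (Fin m) := ⟨⟨0, hm0⟩⟩
  choose μsel hμsel using hyp
  -- iInf toolbox
  have inf_le : ∀ (f : Fin m → ℝ) (j : Fin m), (⨅ k, f k) ≤ f j :=
    fun f j => ciInf_le (Set.finite_range f).bddBelow j
  have exists_inf : ∀ f : Fin m → ℝ, ∃ j₀, (⨅ k, f k) = f j₀ ∧ ∀ j, f j₀ ≤ f j := by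
    intro f
    obtain ⟨j₀, hj₀⟩ := Finite.exists_min f
    exact ⟨j₀, le_antisymm (inf_le f j₀) (le_ciInf hj₀), hj₀⟩
  have inf_add : ∀ (f : Fin m → ℝ) (c : ℝ), (⨅ j, f j + c) = (⨅ j, f j) + c := by
    intro f c
    obtain ⟨j₀, hj₀eq, hj₀⟩ := exists_inf f
    refine le_antisymm ((inf_le (fun j => f j + c) j₀).trans (by rw [hj₀eq])) ?_
    exact le_ciInf fun j => by have := hj₀ j; rw [hj₀eq]; linarith
  have inf_smul : ∀ (f : Fin m → ℝ) (s : ℝ), 0 ≤ s → (⨅ j, s * f j) = s * ⨅ j, f j := by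
    intro f s hs
    obtain ⟨j₀, hj₀eq, hj₀⟩ := exists_inf f
    refine le_antisymm ((inf_le (fun j => s * f j) j₀).trans (by rw [hj₀eq])) ?_
    exact le_ciInf fun j => by
      rw [hj₀eq]
      exact mul_le_mul_of_nonneg_left (hj₀ j) hs
  -- h of 0
  have hzero : h 0 = 0 := by
    have hfac : ∀ s : ℝ, eval (fun i => s * a i + (0 : Fin N → ℝ) i) P
        = eval a P * ∏ _j : Fin m, (s + 0) := by
      intro s
      have hpt : (fun i => s * a i + (0 : Fin N → ℝ) i) = fun i => s * a i := by
        funext i; simp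
      rw [hpt, eval_smul_hom P hhom s a]
      simp [Finset.prod_const, mul_comm]
    rw [hh 0 (fun _ => 0) hfac]
    simp
  -- positive homogeneity
  have part1 : ∀ x : Fin N → ℝ, ∀ s : ℝ, 0 ≤ s → h (s • x) = s * h x := by
    intro x s hs
    rcases eq_or_lt_of_le hs with h0 | hpos
    · subst h0
      rw [zero_smul, hzero, zero_mul]
    · have hfac : ∀ t : ℝ, eval (fun i => t * a i + (s • x) i) P
          = eval a P * ∏ j, (t + s * μsel x j) := by
        intro t
        have hpt : (fun i => t * a i + (s • x) i)
            = fun i => s * ((t/s) * a i + x i) := by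
          funext i
          simp only [Pi.smul_apply, smul_eq_mul]
          field_simp
        rw [hpt, eval_smul_hom P hhom s, hμsel x (t/s)]
        rw [show (s:ℝ)^m = ∏ _j : Fin m, s by simp [Finset.prod_const], ← mul_assoc,
          mul_comm _ (eval a P), mul_assoc, ← Finset.prod_mul_distrib]
        congr 1
        refine Finset.prod_congr rfl fun j _ => ?_
        field_simp
      rw [hh (s • x) _ hfac, hh x _ (hμsel x), inf_smul _ s hs]
  -- shift along a
  have hshift : ∀ (x : Fin N → ℝ) (c : ℝ), h (x + c • a) = h x + c := by
    intro x c
    have hfac : ∀ t : ℝ, eval (fun i => t * a i + (x + c • a) i) P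
        = eval a P * ∏ j, (t + (μsel x j + c)) := by
      intro t
      have hpt : (fun i => t * a i + (x + c • a) i) = fun i => (t+c) * a i + x i := by
        funext i
        simp only [Pi.add_apply, Pi.smul_apply, smul_eq_mul]
        ring
      rw [hpt, hμsel x (t+c)]
      congr 1
      exact Finset.prod_congr rfl fun j _ => by ring
    rw [hh (x + c • a) _ hfac, hh x _ (hμsel x)]
    have : (⨅ j, μsel x j + c) = (⨅ j, μsel x j) + c := inf_add _ c
    rw [show (fun j => μsel x j + c) = fun j => μsel x j + c from rfl] at this
    exact this
  -- all roots positive when h is positive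
  have hpos_roots : ∀ x : Fin N → ℝ, 0 < h x → ∀ j, 0 < μsel x j := by
    intro x hx j
    have := inf_le (μsel x) j
    rw [← hh x _ (hμsel x)] at this
    linarith
  -- core lemma: x, y in the cone ⇒ h(x+y) ≥ 0
  have coreM : ∀ x y : Fin N → ℝ, 0 < h x → 0 < h y → 0 ≤ h (x + y) := by
    intro x y hx hy
    rw [hh (x + y) _ (hμsel (x + y))]
    refine le_ciInf fun j => ?_
    by_contra hneg
    push_neg at hneg
    set s := -(μsel (x + y) j) with hsdef
    have hs : 0 < s := by simp [hsdef]; linarith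
    -- the factorization of y shifted by s•a
    have hfz : ∀ t : ℝ, eval (fun i => t * a i + (fun k => s * a k + y k) i) P
        = eval a P * ∏ k, (t + (μsel y k + s)) := by
      intro t
      have hpt : (fun i => t * a i + (fun k => s * a k + y k) i)
          = fun i => (t+s) * a i + y i := by
        funext i; ring
      rw [hpt, hμsel y (t+s)]
      congr 1
      exact Finset.prod_congr rfl fun k _ => by ring
    have hμz : ∀ k, 0 < μsel y k + s := fun k => by
      have := hpos_roots y hy k; linarith
    have hne := key_real P a x (fun k => s * a k + y k) hhom hm0 hPa
      (fun v => ⟨μsel v, hμsel v⟩) (μsel x) (hμsel x) (hpos_roots x hx)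
      (fun k => μsel y k + s) hfz hμz 1 zero_le_one
    apply hne
    have hpt : (fun i => 1 * x i + (fun k => s * a k + y k) i)
        = fun i => s * a i + (x + y) i := by
      funext i
      simp only [Pi.add_apply]
      ring
    rw [hpt, hμsel (x + y) s, mul_eq_zero]
    right
    refine Finset.prod_eq_zero (Finset.mem_univ j) ?_
    rw [hsdef]
    ring
  -- superadditivity
  have part2 : ∀ x y : Fin N → ℝ, h x + h y ≤ h (x + y) := by
    intro x y
    refine le_of_forall_pos_le_add fun ε hε => ?_
    have hx' : h (x + (ε/2 - h x) • a) = ε/2 := by rw [hshift]; ring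
    have hy' : h (y + (ε/2 - h y) • a) = ε/2 := by rw [hshift]; ring
    have hM := coreM (x + (ε/2 - h x) • a) (y + (ε/2 - h y) • a)
      (by rw [hx']; linarith) (by rw [hy']; linarith)
    have hsum : (x + (ε/2 - h x) • a) + (y + (ε/2 - h y) • a)
        = (x + y) + (ε - h x - h y) • a := by
      funext i
      simp only [Pi.add_apply, Pi.smul_apply, smul_eq_mul]
      ring
    rw [hsum, hshift] at hM
    linarith
  refine ⟨part1, part2, ?_⟩
  intro x hx y hy α β hα hβ hαβ
  simp only [Set.mem_setOf_eq] at hx hy ⊢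
  have h1 : h (α • x) + h (β • y) ≤ h (α • x + β • y) := part2 _ _
  rw [part1 x α hα, part1 y β hβ] at h1
  have h2 : 0 < α * h x + β * h y := by
    rcases eq_or_lt_of_le hα with h0 | hposα
    · have hβ1 : β = 1 := by linarith
      rw [← h0, hβ1]
      simpa using hy
    · exact add_pos_of_pos_of_nonneg (mul_pos hposα hx) (mul_nonneg hβ hy.le)
  linarith
end

section
/- (Gårding, Lemma on derivatives) Let P be a homogeneous polynomial of degree m > 1 on ℝ^N hyperbolic at a ∈ ℝ^N. Then the directional derivative Q(x) = ∑_{k=1}^N a_k ∂P/∂x_k (x), a homogeneous polynomial of degree m-1, is also hyperbolic at a. -/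
open Polynomial in
lemma poly_part (m : ℕ) (hm : 1 < m) (c : ℝ) (hc : c ≠ 0) (μ : Fin m → ℝ) :
    ∃ ν : Fin (m - 1) → ℝ,
      derivative (C c * ∏ j, (X + C (μ j))) = C (m * c) * ∏ j, (X + C (ν j)) := by
  set p : ℝ[X] := C c * ∏ j, (X + C (μ j)) with hp
  have hmono : (∏ j, (X + C (μ j)) : ℝ[X]).Monic :=
    monic_prod_of_monic _ _ fun j _ => monic_X_add_C _
  have hpne : p ≠ 0 := mul_ne_zero (by simpa using hc) hmono.ne_zero
  have hdegprod : (∏ j, (X + C (μ j)) : ℝ[X]).natDegree = m := by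
    rw [natDegree_prod _ _ fun j _ => X_add_C_ne_zero (μ j)]
    simp
  have hpdeg : p.natDegree = m := by
    rw [hp, natDegree_C_mul hc, hdegprod]
  have hplc : p.leadingCoeff = c := by
    rw [hp, leadingCoeff_mul, leadingCoeff_C, hmono.leadingCoeff, mul_one]
  have hsplits : Splits p := by
    exact (Splits.prod fun j _ => Splits.X_add_C _).C_mul c
  have hroots : Multiset.card p.roots = m := by
    rw [← hpdeg, ← splits_iff_card_roots.mp hsplits]
  set q : ℝ[X] := derivative p with hq
  have hqdeg : q.natDegree = m - 1 := by
    have hd := degree_derivative_eq p (by rw [hpdeg]; omega)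
    rw [hpdeg] at hd
    exact natDegree_eq_of_degree_eq_some hd
  have hpc : p.coeff m = c := by rw [← hpdeg, coeff_natDegree, hplc]
  have hqlc : q.leadingCoeff = m * c := by
    have h1 : m - 1 + 1 = m := by omega
    rw [leadingCoeff, hqdeg, hq, coeff_derivative, h1, hpc, Nat.cast_sub (by omega : 1 ≤ m)]
    push_cast
    ring
  have hqne : q ≠ 0 := fun h => by simp [h] at hqlc; rcases hqlc with h|h
    <;> simp_all
  have hcard1 : m ≤ Multiset.card q.roots + 1 := by
    rw [← hroots]; exact p.card_roots_le_derivative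
  have hcard2 : Multiset.card q.roots ≤ m - 1 := hqdeg ▸ q.card_roots' 
  have hqcard : Multiset.card q.roots = m - 1 := by omega
  have hqsplits : Splits q :=
    splits_iff_card_roots.mpr (by rw [hqcard, hqdeg])
  have heq := hqsplits.eq_prod_roots
  set l := q.roots.toList with hl
  have hlen : l.length = m - 1 := by rw [hl, Multiset.length_toList, hqcard]
  refine ⟨fun j => -(l.get (Fin.cast hlen.symm j)), ?_⟩
  rw [heq, hqlc]
  congr 1
  have h1 : q.roots = (l : Multiset ℝ) := (Multiset.coe_toList _).symm
  rw [h1]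
  rw [Multiset.map_coe, Multiset.prod_coe]
  have h2 : (l.map fun a => X - C a) = List.ofFn (fun j : Fin l.length => X - C (l.get j)) := by
    conv_lhs => rw [← List.ofFn_get l]
    rw [List.map_ofFn]
    rfl
  rw [h2, List.prod_ofFn]
  rw [← Fin.prod_congr' _ hlen]
  apply Finset.prod_congr rfl
  intro j _
  simp [sub_eq_add_neg]


open MvPolynomial

lemma evalPoly {N : ℕ} (g : Fin N → Polynomial ℝ) (Q : MvPolynomial (Fin N) ℝ) (s : ℝ) :
    Polynomial.eval s (aeval g Q) = eval (fun i => Polynomial.eval s (g i)) Q := by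
  induction Q using MvPolynomial.induction_on with
  | C r => simp [algebraMap_eq]
  | add p q hp hq => simp [hp, hq]
  | mul_X p i hp => simp [hp]

lemma pderiv_homog {N m : ℕ} {P : MvPolynomial (Fin N) ℝ} (h : P.IsHomogeneous m)
    (k : Fin N) : (pderiv k P).IsHomogeneous (m - 1) := by
  conv_lhs => rw [P.as_sum]
  rw [map_sum]
  apply IsHomogeneous.sum
  intro d hd
  rw [pderiv_monomial]
  by_cases h0 : d k = 0
  · simp [h0, isHomogeneous_zero]
  · apply isHomogeneous_monomial
    have hdm : d.degree = m := by
      rw [Finsupp.degree_eq_weight_one]; exact h (mem_support_iff.mp hd)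
    have hle : Finsupp.single k 1 ≤ d := by
      rw [Finsupp.single_le_iff]; omega
    have : (d - Finsupp.single k 1) + Finsupp.single k 1 = d := tsub_add_cancel_of_le hle
    have h2 : (d - Finsupp.single k 1).degree + (Finsupp.single k 1).degree = m := by
      simp only [Finsupp.degree_eq_weight_one] at hdm ⊢
      rw [← map_add, this, hdm]
    have h3 : (Finsupp.single k 1).degree = 1 := by
      simp [Finsupp.degree_apply, Finsupp.support_single_ne_zero k one_ne_zero]
    omega

lemma homog_eval_smul {N m : ℕ} {P : MvPolynomial (Fin N) ℝ} (h : P.IsHomogeneous m)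
    (a : Fin N → ℝ) (s : ℝ) : eval (fun i => s * a i) P = s ^ m * eval a P := by
  rw [eval_eq, eval_eq, Finset.mul_sum]
  apply Finset.sum_congr rfl
  intro d hd
  have hdm : d.degree = m := by
    rw [Finsupp.degree_eq_weight_one]; exact h (mem_support_iff.mp hd)
  rw [← hdm, Finsupp.degree_apply]
  simp only [mul_pow, Finset.prod_mul_distrib, Finset.prod_pow_eq_pow_sum]
  ring

lemma deriv_aeval {N : ℕ} (a x : Fin N → ℝ) (P : MvPolynomial (Fin N) ℝ) :
    Polynomial.derivative
      (aeval (fun i => Polynomial.C (x i) + Polynomial.X * Polynomial.C (a i)) P) =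
    aeval (fun i => Polynomial.C (x i) + Polynomial.X * Polynomial.C (a i))
      (∑ k, C (a k) * pderiv k P) := by
  induction P using MvPolynomial.induction_on with
  | C r => simp [algebraMap_eq]
  | add p q hp hq =>
      simp only [map_add, hp, hq, mul_add, Finset.sum_add_distrib]
  | mul_X p i hp =>
      have key : ∑ k, C (a k) * pderiv k (p * X i)
          = (∑ k, C (a k) * pderiv k p) * X i + C (a i) * p := by
        have h1 : ∀ k, C (a k) * pderiv k (p * X i)
            = C (a k) * pderiv k p * X i + (if i = k then C (a i) * p else 0) := by
          intro k
          rw [pderiv_mul]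
          by_cases h : i = k
          · subst h; simp; ring
          · simp [pderiv_X_of_ne (Ne.symm h), h]; ring
        rw [Finset.sum_congr rfl fun k _ => h1 k, Finset.sum_add_distrib,
          Finset.sum_ite_eq Finset.univ i, ← Finset.sum_mul]
        simp
      rw [key]
      simp only [map_add, map_mul, aeval_X, algebraMap_eq, aeval_C, Polynomial.derivative_mul,
        Polynomial.derivative_add, Polynomial.derivative_C, Polynomial.derivative_mul,
        Polynomial.derivative_X, hp]
      simp [Polynomial.algebraMap_eq]
      ring

/-- Gårding's lemma on derivatives: if `P`, homogeneous of degree `m > 1`, is hyperbolic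
at `a`, then the directional derivative `Q = ∑ a_k ∂P/∂x_k`, homogeneous of degree `m - 1`,
is also hyperbolic at `a`. -/
theorem garding_directional_derivative_hyperbolic (N m : ℕ) (hm : 1 < m)
    (P : MvPolynomial (Fin N) ℝ) (a : Fin N → ℝ)
    (hhom : P.IsHomogeneous m) (hPa : eval a P ≠ 0)
    (hyp : ∀ x : Fin N → ℝ, ∃ μ : Fin m → ℝ, ∀ s : ℝ,
      eval (fun i => s * a i + x i) P = eval a P * ∏ j, (s + μ j)) :
    (∑ k, C (a k) * pderiv k P).IsHomogeneous (m - 1) ∧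
      ∀ x : Fin N → ℝ, ∃ ν : Fin (m - 1) → ℝ, ∀ s : ℝ,
        eval (fun i => s * a i + x i) (∑ k, C (a k) * pderiv k P) =
          eval a (∑ k, C (a k) * pderiv k P) * ∏ j, (s + ν j) := by
  set Q : MvPolynomial (Fin N) ℝ := ∑ k, C (a k) * pderiv k P with hQ
  -- homogeneity
  have hQhom : Q.IsHomogeneous (m - 1) := by
    apply IsHomogeneous.sum
    intro k _
    have := (isHomogeneous_C (Fin N) (a k)).mul (pderiv_homog hhom k)
    simpa using this
  -- value at a
  have hQa : eval a Q = m * eval a P := by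
    have hA : aeval (fun i => Polynomial.C ((0:ℝ)) + Polynomial.X * Polynomial.C (a i)) P
        = Polynomial.C (eval a P) * Polynomial.X ^ m := by
      apply Polynomial.funext
      intro s
      rw [evalPoly]
      have h := homog_eval_smul hhom a s
      simp only [Polynomial.eval_add, Polynomial.eval_C, Polynomial.eval_mul, Polynomial.eval_X,
        Polynomial.eval_pow, zero_add]
      rw [h]; ring
    have hB := deriv_aeval a (fun _ => 0) P
    rw [hA] at hB
    have hev : eval a Q = Polynomial.eval 1
        (aeval (fun i => Polynomial.C ((0:ℝ)) + Polynomial.X * Polynomial.C (a i)) Q) := by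
      have he : (fun i => Polynomial.eval 1 (Polynomial.C (0:ℝ) + Polynomial.X * Polynomial.C (a i))) = a := funext fun i => by simp
      rw [evalPoly, he]
    rw [← hQ] at hB
    rw [hev, ← hB]
    simp [Polynomial.derivative_pow]
    ring
  refine ⟨hQhom, fun x => ?_⟩
  obtain ⟨μ, hμ⟩ := hyp x
  have hA : aeval (fun i => Polynomial.C (x i) + Polynomial.X * Polynomial.C (a i)) P
      = Polynomial.C (eval a P) * ∏ j, (Polynomial.X + Polynomial.C (μ j)) := by
    apply Polynomial.funext
    intro s
    rw [evalPoly]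
    simp only [Polynomial.eval_add, Polynomial.eval_C, Polynomial.eval_mul, Polynomial.eval_X,
      Polynomial.eval_prod]
    rw [show (fun i => x i + s * a i) = fun i => s * a i + x i from funext fun i => by ring]
    exact hμ s
  obtain ⟨ν, hν⟩ := poly_part m hm (eval a P) hPa μ
  refine ⟨ν, fun s => ?_⟩
  have hB := deriv_aeval a x P
  rw [hA, hν, ← hQ] at hB
  have := congrArg (Polynomial.eval s) hB
  rw [evalPoly] at this
  simp only [Polynomial.eval_add, Polynomial.eval_C, Polynomial.eval_mul, Polynomial.eval_X,
    Polynomial.eval_prod] at this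
  rw [show (fun i => x i + s * a i) = fun i => s * a i + x i from funext fun i => by ring] at this
  rw [hQa, ← this]
end

section
/- Fix integers 1 ≤ m ≤ n, set κ = (2n - m)/m, and let ε > 0, ρ ≥ 0. Define f(ρ) = -(ρ + ε)^{-κ}, so f'(ρ) = κ(ρ+ε)^{-(κ+1)} and f''(ρ) = -κ(κ+1)(ρ+ε)^{-(κ+2)}. Let λ ∈ ℝ^n be the vector with first entry 8f'(ρ) + 4ρ f''(ρ) and all remaining n-1 entries equal to 8f'(ρ). Then S_m(λ) = 8^m κ^m binom(n,m) · ε · (ρ + ε)^{-(2n+1)}. -/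
open Finset in
lemma esymm_split (j k : ℕ) (a b : ℝ) :
    esymm (j+1) (k+1) (fun i : Fin (j+1) => if (i : ℕ) = 0 then a else b) =
      (j.choose k : ℝ) * (a * b ^ k) + (j.choose (k+1) : ℝ) * b ^ (k+1) := by
  classical
  set z : Fin (j+1) := ⟨0, Nat.succ_pos j⟩ with hz
  have hznotin : z ∉ (univ : Finset (Fin (j+1))).erase z := notMem_erase _ _
  have hcard : ((univ : Finset (Fin (j+1))).erase z).card = j := by
    rw [card_erase_of_mem (mem_univ z), card_univ, Fintype.card_fin]
    omega
  have hconst : ∀ c : ℕ, ∀ T ∈ powersetCard c ((univ : Finset (Fin (j+1))).erase z),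
      (∏ i ∈ T, (if (i : ℕ) = 0 then a else b)) = b ^ c := by
    intro c T hT
    rw [mem_powersetCard] at hT
    rw [Finset.prod_congr rfl (fun i hi => ?_), prod_const, hT.2]
    rw [if_neg]
    intro h0
    have : i = z := Fin.ext h0
    exact hznotin (this ▸ hT.1 hi)
  have hdisj : Disjoint (powersetCard (k+1) ((univ : Finset (Fin (j+1))).erase z))
      ((powersetCard k ((univ : Finset (Fin (j+1))).erase z)).image (insert z)) := by
    rw [disjoint_left]
    intro T hT1 hT2
    obtain ⟨S, hS, rfl⟩ := mem_image.1 hT2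
    exact hznotin ((mem_powersetCard.1 hT1).1 (mem_insert_self z S))
  unfold esymm
  rw [show (univ : Finset (Fin (j+1))) = insert z (univ.erase z) from
    (insert_erase (mem_univ z)).symm]
  rw [powersetCard_succ_insert hznotin, sum_union hdisj]
  have hsum1 : ∑ T ∈ powersetCard (k+1) ((univ : Finset (Fin (j+1))).erase z),
      ∏ i ∈ T, (if (i : ℕ) = 0 then a else b) = (j.choose (k+1) : ℝ) * b ^ (k+1) := by
    rw [sum_congr rfl (hconst (k+1)), sum_const, card_powersetCard, hcard, nsmul_eq_mul]
  have hsum2 : ∑ T ∈ (powersetCard k ((univ : Finset (Fin (j+1))).erase z)).image (insert z),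
      ∏ i ∈ T, (if (i : ℕ) = 0 then a else b) = (j.choose k : ℝ) * (a * b ^ k) := by
    rw [sum_image ?hinj]
    case hinj =>
      intro S hS S' hS' h
      rw [mem_coe, mem_powersetCard] at hS hS'
      have h1 : z ∉ S := fun hzS => hznotin (hS.1 hzS)
      have h2 : z ∉ S' := fun hzS => hznotin (hS'.1 hzS)
      rw [← erase_insert h1, ← erase_insert h2, h]
    have hterm : ∀ S ∈ powersetCard k ((univ : Finset (Fin (j+1))).erase z),
        (∏ i ∈ insert z S, (if (i : ℕ) = 0 then a else b)) = a * b ^ k := by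
      intro S hS
      have hzS : z ∉ S := fun h => hznotin ((mem_powersetCard.1 hS).1 h)
      rw [prod_insert hzS, if_pos rfl, hconst k S hS]
    rw [sum_congr rfl hterm, sum_const, card_powersetCard, hcard, nsmul_eq_mul]
  rw [hsum1, hsum2]
  ring

/-- The eigenvalues of the quaternionic Hessian of `-(|q|² + ε)^{-κ_m}` at a point with
`|q|² = ρ` are `8f'(ρ) + 4ρf''(ρ)` (once) and `8f'(ρ)` (`n-1` times); its `m`-Hessian is
`8^m κ_m^m binom(n,m) ε (ρ+ε)^{-(2n+1)}`. -/
theorem esymm_fundamental_solution (n m : ℕ) (hm1 : 1 ≤ m) (hmn : m ≤ n)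
    (ε ρ : ℝ) (hε : 0 < ε) (hρ : 0 ≤ ρ) :
    let κ : ℝ := (2 * n - m) / m
    let f' : ℝ := κ * (ρ + ε) ^ (-(κ + 1))
    let f'' : ℝ := -κ * (κ + 1) * (ρ + ε) ^ (-(κ + 2))
    let lam : Fin n → ℝ := fun i => if (i : ℕ) = 0 then 8 * f' + 4 * ρ * f'' else 8 * f'
    esymm n m lam = 8 ^ m * κ ^ m * (n.choose m : ℝ) * ε * (ρ + ε) ^ (-(2 * (n : ℝ) + 1)) := by
  intro κ f' f'' lam
  have hn : 1 ≤ n := hm1.trans hmn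
  obtain ⟨k, rfl⟩ : ∃ k, m = k + 1 := ⟨m - 1, (Nat.succ_pred_eq_of_pos hm1).symm⟩
  obtain ⟨j, rfl⟩ : ∃ j, n = j + 1 := ⟨n - 1, (Nat.succ_pred_eq_of_pos hn).symm⟩
  simp only [lam, f', f'']
  clear lam f'' f'
  rw [esymm_split]
  set x : ℝ := ρ + ε with hxdef
  have hx : 0 < x := by rw [hxdef]; linarith
  have hk0 : ((k : ℝ) + 1) ≠ 0 := by positivity
  have hκ1 : (κ + 1) * ((k : ℝ) + 1) = 2 * ((j : ℝ) + 1) := by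
    simp only [κ]
    push_cast
    field_simp
    ring
  clear_value κ
  have hA : x ^ (-(κ + 1)) = x * x ^ (-(κ + 2)) := by
    rw [show -(κ + 1) = 1 + -(κ + 2) by ring, Real.rpow_add hx, Real.rpow_one]
  have hxP : x ^ (-(2 * ((j + 1 : ℕ) : ℝ) + 1)) = x ^ k * (x ^ (-(κ + 2))) ^ (k + 1) := by
    rw [← Real.rpow_natCast x k, ← Real.rpow_natCast (x ^ (-(κ + 2))) (k + 1),
      ← Real.rpow_mul hx.le, ← Real.rpow_add hx]
    congr 1
    push_cast
    linear_combination hκ1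
  have hCC : ((j.choose k : ℕ) : ℝ) + (j.choose (k + 1) : ℝ) = ((j + 1).choose (k + 1) : ℝ) := by
    exact_mod_cast (Nat.choose_succ_succ j k).symm
  have hC : (((j + 1).choose (k + 1) : ℕ) : ℝ) * ((k : ℝ) + 1) = ((j : ℝ) + 1) * (j.choose k : ℝ) := by
    exact_mod_cast (Nat.add_one_mul_choose_eq j k).symm
  have h2 : (κ + 1) * (j.choose k : ℝ) = 2 * ((j + 1).choose (k + 1) : ℝ) := by
    refine mul_right_cancel₀ hk0 ?_
    linear_combination (j.choose k : ℝ) * hκ1 - 2 * hC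
  clear_value x
  rw [hA, hxP]
  linear_combination
    ((x ^ (-(κ + 2))) ^ (k + 1) * (8 * κ) ^ k * x ^ k * 8 * κ * x) * hCC +
    ((x ^ (-(κ + 2))) ^ (k + 1) * (8 * κ) ^ k * x ^ k * 8 * κ * (((j + 1).choose (k + 1) : ℝ))) * hxdef -
    ((x ^ (-(κ + 2))) ^ (k + 1) * (8 * κ) ^ k * x ^ k * 4 * ρ * κ) * h2
end

section
/- Let M be an n×n quaternionic hyperhermitian matrix (M* = M, i.e. M_{ij} = conj(M_{ji}) in the quaternions ℍ). Then the Moore determinant of M, defined by det M = ∑_{σ ∈ S_n} sgn(σ) · M_{n_{11} n_{12}} ⋯ M_{n_{1 l_1} n_{11}} · M_{n_{21} n_{22}} ⋯ M_{n_{r l_r} n_{r1}} (where σ is written as a product of disjoint cycles (n_{i1} … n_{i l_i}) with n_{i1} < n_{ij} for j > 1 and n_{11} > n_{21} > ⋯ > n_{r1}), is a real number. -/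
open scoped Classical

/-- The product along the cycle of `σ` through `a`, starting at `a`:
`M_{a σa} M_{σa σ²a} ⋯ M_{σ^{l-1}a, a}` where `l` is the length of the cycle. -/
noncomputable def cycleProd {n : ℕ} (M : Matrix (Fin n) (Fin n) (Quaternion ℝ))
    (σ : Equiv.Perm (Fin n)) (a : Fin n) : Quaternion ℝ :=
  ((List.range (Function.minimalPeriod (⇑σ) a)).map
    (fun k => M ((⇑σ)^[k] a) ((⇑σ)^[k + 1] a))).prod

/-- The minimal elements of the cycles of `σ`, listed in decreasing order. -/
noncomputable def cycleLeaders {n : ℕ} (σ : Equiv.Perm (Fin n)) : List (Fin n) :=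
  ((Finset.univ.filter (fun a : Fin n => ∀ k : ℕ, a ≤ (⇑σ)^[k] a)).sort (· ≤ ·)).reverse

/-- The (ordered) product `M_{n₁₁ n₁₂} ⋯ M_{n_{1 l₁} n₁₁} ⋯ M_{n_{r l_r} n_{r 1}}`
over the cycles of `σ`, cycles ordered by decreasing minimal element, each cycle
starting at its minimal element. -/
noncomputable def mooreTerm {n : ℕ} (M : Matrix (Fin n) (Fin n) (Quaternion ℝ))
    (σ : Equiv.Perm (Fin n)) : Quaternion ℝ :=
  ((cycleLeaders σ).map (cycleProd M σ)).prod

/-- The Moore determinant `det M = ∑_σ sgn σ · (cycle-ordered product)`. -/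
noncomputable def mooreDet {n : ℕ} (M : Matrix (Fin n) (Fin n) (Quaternion ℝ)) :
    Quaternion ℝ :=
  ∑ σ : Equiv.Perm (Fin n), ((Equiv.Perm.sign σ : ℤ) : ℝ) • mooreTerm M σ

namespace MoorePf

open Equiv Function

variable {n : ℕ}

lemma mem_periodicPts_perm (σ : Equiv.Perm (Fin n)) (a : Fin n) :
    a ∈ Function.periodicPts ⇑σ := by
  refine ⟨orderOf σ, orderOf_pos σ, ?_⟩
  show (⇑σ)^[orderOf σ] a = a
  rw [Equiv.Perm.iterate_eq_pow, pow_orderOf_eq_one]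
  rfl

lemma mp_pos (σ : Equiv.Perm (Fin n)) (a : Fin n) :
    0 < Function.minimalPeriod ⇑σ a :=
  Function.minimalPeriod_pos_of_mem_periodicPts (mem_periodicPts_perm σ a)

lemma minimalPeriod_eq_of_iff {f g : Fin n → Fin n} {a : Fin n}
    (hf : a ∈ Function.periodicPts f) (hg : a ∈ Function.periodicPts g)
    (h : ∀ k, f^[k] a = a ↔ g^[k] a = a) :
    Function.minimalPeriod f a = Function.minimalPeriod g a := by
  apply le_antisymm
  · have h1 : Function.IsPeriodicPt f (Function.minimalPeriod g a) a :=
      (h _).mpr Function.iterate_minimalPeriod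
    exact h1.minimalPeriod_le (Function.minimalPeriod_pos_of_mem_periodicPts hg)
  · have h1 : Function.IsPeriodicPt g (Function.minimalPeriod f a) a :=
      (h _).mp Function.iterate_minimalPeriod
    exact h1.minimalPeriod_le (Function.minimalPeriod_pos_of_mem_periodicPts hf)

lemma iterate_inv_fixed_iff (σ : Equiv.Perm (Fin n)) (a : Fin n) (k : ℕ) :
    (⇑σ⁻¹)^[k] a = a ↔ (⇑σ)^[k] a = a := by
  rw [Equiv.Perm.iterate_eq_pow, Equiv.Perm.iterate_eq_pow, inv_pow,
    Equiv.Perm.inv_eq_iff_eq, eq_comm]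

lemma minimalPeriod_inv (σ : Equiv.Perm (Fin n)) (a : Fin n) :
    Function.minimalPeriod ⇑σ⁻¹ a = Function.minimalPeriod ⇑σ a :=
  minimalPeriod_eq_of_iff (mem_periodicPts_perm σ⁻¹ a) (mem_periodicPts_perm σ a)
    (iterate_inv_fixed_iff σ a)

lemma inv_iterate_eq (σ : Equiv.Perm (Fin n)) (a : Fin n) {k : ℕ}
    (hk : k ≤ Function.minimalPeriod ⇑σ a) :
    (⇑σ⁻¹)^[k] a = (⇑σ)^[Function.minimalPeriod ⇑σ a - k] a := by
  apply (Equiv.injective (σ ^ k))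
  have h1 : (σ ^ k) ((⇑σ⁻¹)^[k] a) = a := by
    rw [Equiv.Perm.iterate_eq_pow, inv_pow]
    exact Equiv.apply_symm_apply (σ ^ k) a
  have h2 : (σ ^ k) ((⇑σ)^[Function.minimalPeriod ⇑σ a - k] a) = a := by
    rw [Equiv.Perm.iterate_eq_pow, ← Equiv.Perm.mul_apply, ← pow_add,
      Nat.add_sub_cancel' hk, ← Equiv.Perm.iterate_eq_pow]
    exact Function.iterate_minimalPeriod
  rw [h1, h2]

lemma exists_inv_iterate (σ : Equiv.Perm (Fin n)) (a : Fin n) (k : ℕ) :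
    ∃ m : ℕ, (⇑σ⁻¹)^[m] a = (⇑σ)^[k] a := by
  have hpos : 0 < Function.minimalPeriod ⇑σ a := mp_pos σ a
  refine ⟨Function.minimalPeriod ⇑σ a - k % Function.minimalPeriod ⇑σ a, ?_⟩
  rw [inv_iterate_eq σ a (Nat.sub_le _ _),
    Nat.sub_sub_self (Nat.mod_lt k hpos).le]
  exact Function.iterate_mod_minimalPeriod_eq

lemma exists_iterate_inv (σ : Equiv.Perm (Fin n)) (a : Fin n) (k : ℕ) :
    ∃ m : ℕ, (⇑σ)^[m] a = (⇑σ⁻¹)^[k] a := by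
  have hpos : 0 < Function.minimalPeriod ⇑σ a := mp_pos σ a
  have hinv : Function.minimalPeriod ⇑σ⁻¹ a = Function.minimalPeriod ⇑σ a :=
    minimalPeriod_inv σ a
  refine ⟨Function.minimalPeriod ⇑σ a - k % Function.minimalPeriod ⇑σ a, ?_⟩
  have h1 : (⇑σ⁻¹)^[k % Function.minimalPeriod ⇑σ a] a
      = (⇑σ)^[Function.minimalPeriod ⇑σ a - k % Function.minimalPeriod ⇑σ a] a :=
    inv_iterate_eq σ a (Nat.mod_lt k hpos).le
  have h2 : (⇑σ⁻¹)^[k % Function.minimalPeriod ⇑σ a] a = (⇑σ⁻¹)^[k] a := by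
    rw [← hinv]
    exact Function.iterate_mod_minimalPeriod_eq
  rw [← h2, h1]

lemma sameCycle_iterate (σ : Equiv.Perm (Fin n)) (x : Fin n) (k : ℕ) :
    σ.SameCycle x ((⇑σ)^[k] x) :=
  ⟨(k : ℤ), by rw [zpow_natCast]; rfl⟩

lemma sameCycle_iterate_inv (σ : Equiv.Perm (Fin n)) (x : Fin n) (k : ℕ) :
    σ.SameCycle x ((⇑σ⁻¹)^[k] x) := by
  obtain ⟨m, hm⟩ := exists_iterate_inv σ x k
  exact hm ▸ sameCycle_iterate σ x m

/-- The permutation obtained from `σ` by inverting it on the cycle of `b`. -/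
noncomputable def pflip (σ : Equiv.Perm (Fin n)) (b : Fin n) : Equiv.Perm (Fin n) :=
  σ * ((σ.cycleOf b) ^ 2)⁻¹

lemma pflip_apply_mem {σ : Equiv.Perm (Fin n)} {b x : Fin n}
    (h : σ.SameCycle b x) : pflip σ b x = σ⁻¹ x := by
  have h1 : σ⁻¹.SameCycle b x := (Equiv.Perm.sameCycle_inv).mpr h
  have h2 : σ⁻¹.SameCycle b (σ⁻¹ x) := h1.apply_right
  simp only [pflip, sq, mul_inv_rev, Equiv.Perm.mul_apply, Equiv.Perm.cycleOf_inv,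
    Equiv.Perm.cycleOf_apply, h1, h2, if_true]
  exact Equiv.apply_symm_apply σ (σ⁻¹ x)

lemma pflip_apply_not_mem {σ : Equiv.Perm (Fin n)} {b x : Fin n}
    (h : ¬ σ.SameCycle b x) : pflip σ b x = σ x := by
  have h1 : ¬ σ⁻¹.SameCycle b x := fun hc => h ((Equiv.Perm.sameCycle_inv).mp hc)
  simp only [pflip, sq, mul_inv_rev, Equiv.Perm.mul_apply, Equiv.Perm.cycleOf_inv,
    Equiv.Perm.cycleOf_apply, h1, if_false]

lemma pflip_iterate_mem {σ : Equiv.Perm (Fin n)} {b x : Fin n}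
    (h : σ.SameCycle b x) (k : ℕ) : (⇑(pflip σ b))^[k] x = (⇑σ⁻¹)^[k] x := by
  induction k with
  | zero => rfl
  | succ k ih =>
    rw [Function.iterate_succ_apply', Function.iterate_succ_apply', ih,
      pflip_apply_mem (h.trans (sameCycle_iterate_inv σ x k))]

lemma pflip_iterate_not_mem {σ : Equiv.Perm (Fin n)} {b x : Fin n}
    (h : ¬ σ.SameCycle b x) (k : ℕ) : (⇑(pflip σ b))^[k] x = (⇑σ)^[k] x := by
  induction k with
  | zero => rfl
  | succ k ih =>
    rw [Function.iterate_succ_apply', Function.iterate_succ_apply', ih,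
      pflip_apply_not_mem (fun hc => h (hc.trans (sameCycle_iterate σ x k).symm))]

lemma pflip_sameCycle_b (σ : Equiv.Perm (Fin n)) (b x : Fin n) :
    (pflip σ b).SameCycle b x ↔ σ.SameCycle b x := by
  constructor
  · intro h
    obtain ⟨i, _, hi⟩ := h.exists_pow_eq'
    have hb : (⇑(pflip σ b))^[i] b = (⇑σ⁻¹)^[i] b :=
      pflip_iterate_mem (Equiv.Perm.SameCycle.refl σ b) i
    have : (⇑σ⁻¹)^[i] b = x := by rw [← hb]; exact hi
    exact this ▸ sameCycle_iterate_inv σ b i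
  · intro h
    obtain ⟨i, _, hi⟩ := h.exists_pow_eq'
    obtain ⟨m, hm⟩ := exists_inv_iterate σ b i
    have hb : (⇑(pflip σ b))^[m] b = (⇑σ⁻¹)^[m] b :=
      pflip_iterate_mem (Equiv.Perm.SameCycle.refl σ b) m
    have : (⇑(pflip σ b))^[m] b = x := by rw [hb, hm]; exact hi
    exact this ▸ sameCycle_iterate (pflip σ b) b m

lemma pflip_pflip (σ : Equiv.Perm (Fin n)) (b : Fin n) :
    pflip (pflip σ b) b = σ := by
  refine Equiv.ext fun x => ?_
  by_cases h : σ.SameCycle b x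
  · have h' : (pflip σ b).SameCycle b x := (pflip_sameCycle_b σ b x).mpr h
    rw [pflip_apply_mem h', Equiv.Perm.inv_eq_iff_eq,
      pflip_apply_mem (h.apply_right)]
    exact (Equiv.symm_apply_apply σ x).symm
  · have h' : ¬ (pflip σ b).SameCycle b x := fun hc => h ((pflip_sameCycle_b σ b x).mp hc)
    rw [pflip_apply_not_mem h', pflip_apply_not_mem h]

lemma pflip_minimalPeriod (σ : Equiv.Perm (Fin n)) (b x : Fin n) :
    Function.minimalPeriod ⇑(pflip σ b) x = Function.minimalPeriod ⇑σ x := by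
  by_cases h : σ.SameCycle b x
  · refine (minimalPeriod_eq_of_iff (mem_periodicPts_perm _ _) (mem_periodicPts_perm _ _)
      (fun k => ?_)).trans (minimalPeriod_inv σ x)
    rw [pflip_iterate_mem h]
  · refine minimalPeriod_eq_of_iff (mem_periodicPts_perm _ _) (mem_periodicPts_perm _ _)
      (fun k => ?_)
    rw [pflip_iterate_not_mem h]

lemma pflip_sign (σ : Equiv.Perm (Fin n)) (b : Fin n) :
    Equiv.Perm.sign (pflip σ b) = Equiv.Perm.sign σ := by
  unfold pflip
  rw [map_mul, map_inv, map_pow, Int.units_sq, inv_one, mul_one]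

lemma isLeader_pflip (σ : Equiv.Perm (Fin n)) (b x : Fin n) :
    (∀ k : ℕ, x ≤ (⇑(pflip σ b))^[k] x) ↔ (∀ k : ℕ, x ≤ (⇑σ)^[k] x) := by
  by_cases h : σ.SameCycle b x
  · simp only [pflip_iterate_mem h]
    constructor
    · intro H k
      obtain ⟨m, hm⟩ := exists_inv_iterate σ x k
      rw [← hm]; exact H m
    · intro H k
      obtain ⟨m, hm⟩ := exists_iterate_inv σ x k
      rw [← hm]; exact H m
  · simp only [pflip_iterate_not_mem h]

lemma cycleLeaders_pflip (σ : Equiv.Perm (Fin n)) (b : Fin n) :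
    cycleLeaders (pflip σ b) = cycleLeaders σ := by
  unfold cycleLeaders
  congr 2
  ext x
  simp only [Finset.mem_filter, Finset.mem_univ, true_and]
  exact isLeader_pflip σ b x

lemma cycleProd_pflip_not_mem (M : Matrix (Fin n) (Fin n) (Quaternion ℝ))
    (σ : Equiv.Perm (Fin n)) {b a : Fin n} (h : ¬ σ.SameCycle b a) :
    cycleProd M (pflip σ b) a = cycleProd M σ a := by
  unfold cycleProd
  rw [pflip_minimalPeriod]
  congr 1
  apply List.map_congr_left
  intro k _
  rw [pflip_iterate_not_mem h, pflip_iterate_not_mem h]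

lemma star_list_prod (l : List (Quaternion ℝ)) :
    star l.prod = ((l.map star).reverse).prod := by
  induction l with
  | nil => simp
  | cons x t ih => simp [star_mul, ih]

lemma cycleProd_pflip_self (M : Matrix (Fin n) (Fin n) (Quaternion ℝ))
    (hherm : ∀ i j, M i j = star (M j i)) (σ : Equiv.Perm (Fin n)) (b : Fin n) :
    cycleProd M (pflip σ b) b = star (cycleProd M σ b) := by
  unfold cycleProd
  rw [pflip_minimalPeriod, star_list_prod, List.map_map, ← List.map_reverse,
    List.range_eq_range', List.reverse_range']
  simp only [zero_add, List.map_map]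
  rw [← List.range_eq_range']
  congr 1
  apply List.map_congr_left
  intro k hk
  rw [List.mem_range] at hk
  set p := Function.minimalPeriod ⇑σ b with hp
  show M ((⇑(pflip σ b))^[k] b) ((⇑(pflip σ b))^[k + 1] b)
      = star (M ((⇑σ)^[p - 1 - k] b) ((⇑σ)^[p - 1 - k + 1] b))
  rw [pflip_iterate_mem (Equiv.Perm.SameCycle.refl σ b) k,
    pflip_iterate_mem (Equiv.Perm.SameCycle.refl σ b) (k + 1)]
  have e1 : p - 1 - k + 1 = p - k := by omega
  have e2 : p - 1 - k = p - (k + 1) := by omega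
  rw [e1, e2, ← hherm]
  have h1 : (⇑σ⁻¹)^[k] b = (⇑σ)^[p - k] b := inv_iterate_eq σ b (by omega)
  have h2 : (⇑σ⁻¹)^[k + 1] b = (⇑σ)^[p - (k + 1)] b := inv_iterate_eq σ b (by omega)
  rw [h1, h2]

lemma cycleLeaders_nodup (σ : Equiv.Perm (Fin n)) : (cycleLeaders σ).Nodup := by
  unfold cycleLeaders
  rw [List.nodup_reverse]
  exact Finset.sort_nodup _ _

lemma mem_cycleLeaders (σ : Equiv.Perm (Fin n)) (x : Fin n) :
    x ∈ cycleLeaders σ ↔ ∀ k : ℕ, x ≤ (⇑σ)^[k] x := by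
  unfold cycleLeaders
  rw [List.mem_reverse, Finset.mem_sort, Finset.mem_filter]
  simp

lemma leaders_not_sameCycle {σ : Equiv.Perm (Fin n)} {a b : Fin n}
    (ha : a ∈ cycleLeaders σ) (hb : b ∈ cycleLeaders σ) (hab : a ≠ b) :
    ¬ σ.SameCycle a b := by
  intro h
  rw [mem_cycleLeaders] at ha hb
  obtain ⟨i, _, hi⟩ := h.exists_pow_eq'
  obtain ⟨j, _, hj⟩ := h.symm.exists_pow_eq'
  have h1 : a ≤ b := by
    have := ha i
    rw [Equiv.Perm.iterate_eq_pow, hi] at this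
    exact this
  have h2 : b ≤ a := by
    have := hb j
    rw [Equiv.Perm.iterate_eq_pow, hj] at this
    exact this
  exact hab (le_antisymm h1 h2)

/-- Partially realified Moore term: the first `j` cycle blocks are replaced by
their real parts (collected as a real scalar). -/
noncomputable def gq (M : Matrix (Fin n) (Fin n) (Quaternion ℝ)) (j : ℕ)
    (σ : Equiv.Perm (Fin n)) : Quaternion ℝ :=
  (((cycleLeaders σ).take j).map (fun a => (cycleProd M σ a).re)).prod •
    (((cycleLeaders σ).drop j).map (cycleProd M σ)).prod

lemma gq_zero (M : Matrix (Fin n) (Fin n) (Quaternion ℝ)) (σ : Equiv.Perm (Fin n)) :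
    gq M 0 σ = mooreTerm M σ := by
  simp [gq, mooreTerm]

lemma gq_of_le {M : Matrix (Fin n) (Fin n) (Quaternion ℝ)} {j : ℕ}
    {σ : Equiv.Perm (Fin n)} (h : (cycleLeaders σ).length ≤ j) :
    gq M j σ = gq M (j + 1) σ := by
  unfold gq
  rw [List.take_of_length_le h, List.take_of_length_le (h.trans (Nat.le_succ j)),
    List.drop_eq_nil_of_le h, List.drop_eq_nil_of_le (h.trans (Nat.le_succ j))]

lemma gq_pair (M : Matrix (Fin n) (Fin n) (Quaternion ℝ))
    (hherm : ∀ i j, M i j = star (M j i)) {j : ℕ} {σ : Equiv.Perm (Fin n)}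
    (h : j < (cycleLeaders σ).length) :
    gq M j σ + gq M j (pflip σ ((cycleLeaders σ).get ⟨j, h⟩))
      = (2 : ℝ) • gq M (j + 1) σ := by
  set L := cycleLeaders σ with hLdef
  set a := L.get ⟨j, h⟩ with hadef
  set τ := pflip σ a with hτ
  have hL : cycleLeaders τ = L := cycleLeaders_pflip σ a
  have haL : a ∈ L := L.get_mem _
  have hdrop : L.drop j = a :: L.drop (j + 1) := by
    rw [List.drop_eq_getElem_cons h]
    rfl
  have hnd : L.Nodup := cycleLeaders_nodup σ
  have htake : ∀ x ∈ L.take j, x ≠ a := by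
    intro x hx hxa
    exact (List.disjoint_take_drop hnd (le_refl j)) hx
      (by rw [hdrop, ← hxa] at *; exact List.mem_cons_self)
  have hdropne : ∀ x ∈ L.drop (j + 1), x ≠ a := by
    have h2 : (L.drop j).Nodup := (List.drop_sublist j L).nodup hnd
    rw [hdrop] at h2
    have hna := (List.nodup_cons.mp h2).1
    intro x hx hxa
    exact hna (hxa ▸ hx)
  have hcpT : ∀ x ∈ L, x ≠ a → cycleProd M τ x = cycleProd M σ x := by
    intro x hx hxa
    exact cycleProd_pflip_not_mem M σ (leaders_not_sameCycle haL hx (Ne.symm hxa))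
  have hpre : (L.take j).map (fun x => (cycleProd M τ x).re)
      = (L.take j).map (fun x => (cycleProd M σ x).re) := by
    apply List.map_congr_left
    intro x hx
    rw [hcpT x (List.take_subset _ _ hx) (htake x hx)]
  have hrest : (L.drop (j + 1)).map (cycleProd M τ)
      = (L.drop (j + 1)).map (cycleProd M σ) := by
    apply List.map_congr_left
    intro x hx
    exact hcpT x (List.drop_subset _ _ hx) (hdropne x hx)
  set P : ℝ := ((L.take j).map (fun x => (cycleProd M σ x).re)).prod with hP
  set B : Quaternion ℝ := cycleProd M σ a with hB
  set R : Quaternion ℝ := ((L.drop (j + 1)).map (cycleProd M σ)).prod with hR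
  have e1 : gq M j σ = P • (B * R) := by
    unfold gq
    rw [← hLdef, hdrop, List.map_cons, List.prod_cons]
  have e2 : gq M j τ = P • (star B * R) := by
    unfold gq
    rw [hL, hdrop, List.map_cons, List.prod_cons, hpre, hrest,
      cycleProd_pflip_self M hherm σ a]
  have e3 : gq M (j + 1) σ = (P * B.re) • R := by
    unfold gq
    rw [← hLdef, ← List.take_concat_get' L j h, List.map_append, List.prod_append]
    simp only [List.map_cons, List.map_nil, List.prod_cons, List.prod_nil, mul_one]
    rfl
  rw [e1, e2, e3, ← smul_add, ← add_mul, Quaternion.self_add_star',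
    Quaternion.coe_mul_eq_smul, smul_smul, smul_smul]
  congr 1
  ring

lemma step (M : Matrix (Fin n) (Fin n) (Quaternion ℝ))
    (hherm : ∀ i j, M i j = star (M j i)) (j : ℕ) :
    (∑ σ : Equiv.Perm (Fin n), ((Equiv.Perm.sign σ : ℤ) : ℝ) • gq M j σ)
      = ∑ σ : Equiv.Perm (Fin n), ((Equiv.Perm.sign σ : ℤ) : ℝ) • gq M (j + 1) σ := by
  set T : Equiv.Perm (Fin n) → Equiv.Perm (Fin n) := fun σ =>
    if h : j < (cycleLeaders σ).length then pflip σ ((cycleLeaders σ).get ⟨j, h⟩)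
    else σ with hT
  have hget : ∀ (l l' : List (Fin n)) (hll : l = l') (h1 : j < l.length),
      l.get ⟨j, h1⟩ = l'.get ⟨j, hll ▸ h1⟩ := by
    rintro l l' rfl h1; rfl
  have hTinv : Function.Involutive T := by
    intro σ
    by_cases h : j < (cycleLeaders σ).length
    · have hL : cycleLeaders (pflip σ ((cycleLeaders σ).get ⟨j, h⟩)) = cycleLeaders σ :=
        cycleLeaders_pflip σ _
      simp only [hT]
      rw [dif_pos h, dif_pos (by rw [hL]; exact h),
        hget _ _ hL (by rw [hL]; exact h), pflip_pflip]
    · simp only [hT]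
      rw [dif_neg h, dif_neg h]
  have hsign : ∀ σ, Equiv.Perm.sign (T σ) = Equiv.Perm.sign σ := by
    intro σ
    by_cases h : j < (cycleLeaders σ).length
    · simp only [hT]; rw [dif_pos h, pflip_sign]
    · simp only [hT]; rw [dif_neg h]
  have key : ∀ σ : Equiv.Perm (Fin n),
      ((Equiv.Perm.sign σ : ℤ) : ℝ) • gq M j σ
        + ((Equiv.Perm.sign (T σ) : ℤ) : ℝ) • gq M j (T σ)
      = (2 : ℝ) • (((Equiv.Perm.sign σ : ℤ) : ℝ) • gq M (j + 1) σ) := by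
    intro σ
    rw [hsign]
    by_cases h : j < (cycleLeaders σ).length
    · simp only [hT]
      rw [dif_pos h, ← smul_add, gq_pair M hherm h, smul_comm]
    · simp only [hT]
      rw [dif_neg h, gq_of_le (not_lt.mp h), ← two_smul ℝ, smul_comm]
  have h1 : (∑ σ : Equiv.Perm (Fin n),
        ((Equiv.Perm.sign (T σ) : ℤ) : ℝ) • gq M j (T σ))
      = ∑ σ : Equiv.Perm (Fin n), ((Equiv.Perm.sign σ : ℤ) : ℝ) • gq M j σ :=
    Fintype.sum_bijective T hTinv.bijective _ _ (fun σ => rfl)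
  have h2 : (∑ σ : Equiv.Perm (Fin n),
        (((Equiv.Perm.sign σ : ℤ) : ℝ) • gq M j σ
          + ((Equiv.Perm.sign (T σ) : ℤ) : ℝ) • gq M j (T σ)))
      = ∑ σ : Equiv.Perm (Fin n),
        (2 : ℝ) • (((Equiv.Perm.sign σ : ℤ) : ℝ) • gq M (j + 1) σ) :=
    Finset.sum_congr rfl (fun σ _ => key σ)
  rw [Finset.sum_add_distrib, h1, ← Finset.smul_sum] at h2
  have h3 : (2 : ℝ) • (∑ σ : Equiv.Perm (Fin n),
        ((Equiv.Perm.sign σ : ℤ) : ℝ) • gq M j σ)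
      = (2 : ℝ) • ∑ σ : Equiv.Perm (Fin n),
        ((Equiv.Perm.sign σ : ℤ) : ℝ) • gq M (j + 1) σ := by
    rw [two_smul]; exact h2
  have := congrArg (fun x : Quaternion ℝ => (2 : ℝ)⁻¹ • x) h3
  simpa [smul_smul] using this

end MoorePf

/-- The Moore determinant of a quaternionic hyperhermitian matrix is real. -/
theorem mooreDet_real {n : ℕ} (M : Matrix (Fin n) (Fin n) (Quaternion ℝ))
    (hherm : ∀ i j, M i j = star (M j i)) :
    ∃ r : ℝ, mooreDet M = (r : Quaternion ℝ) := by
  have hstep : ∀ j : ℕ, mooreDet M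
      = ∑ σ : Equiv.Perm (Fin n), ((Equiv.Perm.sign σ : ℤ) : ℝ) • MoorePf.gq M j σ := by
    intro j
    induction j with
    | zero =>
      unfold mooreDet
      exact Finset.sum_congr rfl (fun σ _ => by rw [MoorePf.gq_zero])
    | succ j ih => rw [ih, MoorePf.step M hherm j]
  have hlen : ∀ σ : Equiv.Perm (Fin n), (cycleLeaders σ).length ≤ n := by
    intro σ
    have := (MoorePf.cycleLeaders_nodup σ).length_le_card
    simpa using this
  have hgq : ∀ σ : Equiv.Perm (Fin n), MoorePf.gq M n σ
      = (((cycleLeaders σ).map (fun a => (cycleProd M σ a).re)).prod : ℝ)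
        • (1 : Quaternion ℝ) := by
    intro σ
    unfold MoorePf.gq
    rw [List.take_of_length_le (hlen σ), List.drop_eq_nil_of_le (hlen σ)]
    simp
  refine ⟨∑ σ : Equiv.Perm (Fin n), ((Equiv.Perm.sign σ : ℤ) : ℝ)
    * ((cycleLeaders σ).map (fun a => (cycleProd M σ a).re)).prod, ?_⟩
  rw [hstep n,
    Finset.sum_congr rfl (fun σ _ => by rw [hgq σ, smul_smul] :
      ∀ σ ∈ Finset.univ, ((Equiv.Perm.sign σ : ℤ) : ℝ) • MoorePf.gq M n σ
        = (((Equiv.Perm.sign σ : ℤ) : ℝ)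
          * ((cycleLeaders σ).map (fun a => (cycleProd M σ a).re)).prod)
          • (1 : Quaternion ℝ)),
    ← Finset.sum_smul, ← Quaternion.coe_mul_eq_smul, mul_one]
end
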